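/- arXiv:2510.07560 — 3 statements merged into one kernel-verified Lean document; each statement's English description precedes it below -/
import Mathlib

section
/- Let I_𝒢 ⊆ ℂ[Mat_{m,n}] be a contiguous determinantal ideal, generated by the set 𝒢 of all d_i×d_i minors of contiguous submatrices U_i = [a_i,a_i']×[b_i,b_i'] of the generic matrix Z for 1 ≤ i ≤ k. Suppose ≺ is an antidiagonal term order and 𝒢 is a Gröbner basis for I_𝒢 with respect to ≺ (so I_𝒢 is Gröbner-determinantal). Let (𝐈,𝐉) be a Levi datum with a_i − 1, a_i' ∈ 𝐈 and b_i − 1, b_i' ∈ 𝐉 for all i, so that I_𝒢 is L_𝐈×L_𝐉-stable. Then I_𝒢 is (𝐈,𝐉,≺)-bicrystalline. -/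
namespace GCS

/-- Given a labelled word whose letter `cl` plays the role of a closing bracket `)` and
whose letter `op` plays the role of an opening bracket `(`, with `o` the number of currently
unmatched opening brackets seen so far, return the label of the rightmost unmatched
closing bracket (or `none` if every closing bracket is matched). -/
def lastUnmatched {β : Type} (cl op : ℕ) : List (ℕ × β) → ℕ → Option β
  | [], _ => none
  | (a, lbl) :: rest, o =>
    if a = cl then
      if o = 0 then
        match lastUnmatched cl op rest 0 with
        | some x => some x
        | none => some lbl
      else lastUnmatched cl op rest (o - 1)
    else if a = op then lastUnmatched cl op rest (o + 1)
    else lastUnmatched cl op rest o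

variable {m n : ℕ}

/-- The labelled row word of a matrix of nonnegative integers: read the columns left to
right, each column top to bottom, recording `M r c` copies of the (1-based) row index
`r + 1`, each labelled by its column `c`. -/
def rowWordLbl (M : Matrix (Fin m) (Fin n) ℕ) : List (ℕ × Fin n) :=
  (List.finRange n).flatMap fun c =>
    (List.finRange m).flatMap fun r => List.replicate (M r c) (r.1 + 1, c)

/-- The row word `row(M)` (letters are 1-based row indices). -/
def rowWord (M : Matrix (Fin m) (Fin n) ℕ) : List ℕ := (rowWordLbl M).map Prod.fst

/-- The column word `col(M) = row(Mᵀ)`. -/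
def colWord (M : Matrix (Fin m) (Fin n) ℕ) : List ℕ := rowWord M.transpose

/-- The lowering bicrystal operator `f_i^row` (here `i` is the 1-based row index,
`1 ≤ i ≤ m - 1`): locate the rightmost unmatched `)` in `bracket_i(row(M))`, coming from an
entry in row `i` and some column `c`; decrease that entry by one and increase the entry of
row `i+1`, column `c` by one.  Returns `none` if every `)` is matched. -/
def frow (i : ℕ) (M : Matrix (Fin m) (Fin n) ℕ) : Option (Matrix (Fin m) (Fin n) ℕ) :=
  (lastUnmatched i (i + 1) (rowWordLbl M) 0).map fun c =>
    Matrix.of fun a b =>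
      if a.1 + 1 = i ∧ b = c then M a b - 1
      else if a.1 + 1 = i + 1 ∧ b = c then M a b + 1
      else M a b

/-- The raising bicrystal operator `e_i^row`: locate the leftmost unmatched `(` in
`bracket_i(row(M))`, coming from an entry in row `i+1` and some column `c`; decrease that
entry by one and increase the entry of row `i`, column `c` by one. -/
def erow (i : ℕ) (M : Matrix (Fin m) (Fin n) ℕ) : Option (Matrix (Fin m) (Fin n) ℕ) :=
  (lastUnmatched (i + 1) i (rowWordLbl M).reverse 0).map fun c =>
    Matrix.of fun a b =>
      if a.1 + 1 = i + 1 ∧ b = c then M a b - 1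
      else if a.1 + 1 = i ∧ b = c then M a b + 1
      else M a b

/-- `f_j^col(M) = (f_j^row(Mᵀ))ᵀ`. -/
def fcol (j : ℕ) (M : Matrix (Fin m) (Fin n) ℕ) : Option (Matrix (Fin m) (Fin n) ℕ) :=
  (frow j M.transpose).map Matrix.transpose

/-- `e_j^col(M) = (e_j^row(Mᵀ))ᵀ`. -/
def ecol (j : ℕ) (M : Matrix (Fin m) (Fin n) ℕ) : Option (Matrix (Fin m) (Fin n) ℕ) :=
  (erow j M.transpose).map Matrix.transpose

/-- `I` is (the set of cut indices of) a Levi datum for size `m`: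
`I = {0 = i_0 < i_1 < ⋯ < i_r = m}`. -/
def IsLeviDatum (m : ℕ) (I : Finset ℕ) : Prop := 0 ∈ I ∧ m ∈ I ∧ ∀ x ∈ I, x ≤ m

/-- The admissible bicrystal operators for the Levi datum `(𝐈, 𝐉)` are
`f_i^row, e_i^row` for `i ∉ 𝐈` and `f_j^col, e_j^col` for `j ∉ 𝐉`. -/
def AdmissibleOp (m n : ℕ) (I J : Finset ℕ)
    (φ : Matrix (Fin m) (Fin n) ℕ → Option (Matrix (Fin m) (Fin n) ℕ)) : Prop :=
  (∃ i, 0 < i ∧ i < m ∧ i ∉ I ∧ (φ = frow i ∨ φ = erow i)) ∨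
  (∃ j, 0 < j ∧ j < n ∧ j ∉ J ∧ (φ = fcol j ∨ φ = ecol j))

/-- A set `S` of exponent matrices is `(𝐈,𝐉)`-bicrystal closed if `φ(M) ∈ S ∪ {∅}` for
every admissible operator `φ` and every `M ∈ S`. -/
def BicrystalClosed (m n : ℕ) (I J : Finset ℕ) (S : Set (Matrix (Fin m) (Fin n) ℕ)) : Prop :=
  ∀ φ, AdmissibleOp m n I J φ → ∀ M ∈ S, ∀ N, φ M = some N → N ∈ S

/-- A term order on monomials in variables indexed by `σ`: a linear order on exponent
vectors compatible with addition and having `0` (i.e. the monomial `1`) as minimum. -/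
structure TermOrder (σ : Type) where
  le : (σ →₀ ℕ) → (σ →₀ ℕ) → Prop
  le_refl : ∀ u, le u u
  le_trans : ∀ u v w, le u v → le v w → le u w
  le_antisymm : ∀ u v, le u v → le v u → u = v
  le_total : ∀ u v, le u v ∨ le v u
  add_le_add : ∀ u v w, le u v → le (u + w) (v + w)
  zero_le : ∀ u, le 0 u

/-- `u` is the exponent vector of the initial term `init_≺ f`: it lies in the support of
`f` and is `≺`-largest among the monomials of `f`.  (If `f = 0`, no `u` satisfies this.) -/
def IsInitExp {σ : Type} (ord : TermOrder σ) (f : MvPolynomial σ ℂ) (u : σ →₀ ℕ) : Prop :=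
  u ∈ f.support ∧ ∀ v ∈ f.support, ord.le v u

/-- The initial ideal `init_≺ I = ⟨init_≺ f : f ∈ I, f ≠ 0⟩`. -/
noncomputable def initialIdeal {σ : Type} (ord : TermOrder σ) (I : Ideal (MvPolynomial σ ℂ)) :
    Ideal (MvPolynomial σ ℂ) :=
  Ideal.span {p | ∃ f ∈ I, ∃ u, IsInitExp ord f u ∧ p = MvPolynomial.monomial u (1 : ℂ)}

/-- The exponent vector of the monomial `z^M` attached to the matrix `M`. -/
noncomputable def expOf (M : Matrix (Fin m) (Fin n) ℕ) : (Fin m × Fin n) →₀ ℕ :=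
  Finsupp.equivFunOnFinite.symm fun p => M p.1 p.2

/-- `Mat_≺ I`, the set of exponent matrices of monomials lying in `init_≺ I`. -/
def matLT (ord : TermOrder (Fin m × Fin n)) (I : Ideal (MvPolynomial (Fin m × Fin n) ℂ)) :
    Set (Matrix (Fin m) (Fin n) ℕ) :=
  {M | MvPolynomial.monomial (expOf M) (1 : ℂ) ∈ initialIdeal ord I}

/-- Indices `a`, `b` (0-based) lie in the same diagonal block determined by the cuts `I`. -/
def SameBlock (I : Finset ℕ) (a b : ℕ) : Prop := ∀ i ∈ I, (a < i ↔ b < i)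

/-- `g` belongs to the block-diagonal Levi subgroup `L_𝐈 ≤ GL_m`: `g` is invertible and
vanishes outside the diagonal blocks cut out by `I`. -/
def InLevi {m : ℕ} (I : Finset ℕ) (g : Matrix (Fin m) (Fin m) ℂ) : Prop :=
  IsUnit g ∧ ∀ a b : Fin m, ¬ SameBlock I a.1 b.1 → g a b = 0

/-- The action of the pair `(g, h)` on `ℂ[Mat_{m,n}]`: `((g,h)·f)(Z) = f(g Z hᵀ)`,
i.e. the substitution `z_{ab} ↦ ∑_{c,d} g_{ac} h_{bd} z_{cd}`. -/
noncomputable def leviAct (g : Matrix (Fin m) (Fin m) ℂ) (h : Matrix (Fin n) (Fin n) ℂ) :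
    MvPolynomial (Fin m × Fin n) ℂ →ₐ[ℂ] MvPolynomial (Fin m × Fin n) ℂ :=
  MvPolynomial.aeval fun p => ∑ c : Fin m, ∑ d : Fin n,
    MvPolynomial.C (g p.1 c * h p.2 d) * MvPolynomial.X (c, d)

/-- The ideal `Idl` is stable under the action of `L_𝐈 × L_𝐉`. -/
def LeviStable (I J : Finset ℕ) (Idl : Ideal (MvPolynomial (Fin m × Fin n) ℂ)) : Prop :=
  ∀ g h, InLevi I g → InLevi J h → ∀ f ∈ Idl, leviAct g h f ∈ Idl

/-- An `L_𝐈 × L_𝐉`-stable ideal `Idl` is `(𝐈,𝐉,≺)`-bicrystalline: the set of exponent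
matrices of the standard monomials (monomials not in `init_≺ Idl`) is bicrystal closed. -/
def IsBicrystalline (m n : ℕ) (I J : Finset ℕ) (ord : TermOrder (Fin m × Fin n))
    (Idl : Ideal (MvPolynomial (Fin m × Fin n) ℂ)) : Prop :=
  LeviStable I J Idl ∧ BicrystalClosed m n I J {M | M ∉ matLT ord Idl}

/-- `z^a` divides `z^b` entrywise, both optional values being defined. -/
def OptDvd (x y : Option (Matrix (Fin m) (Fin n) ℕ)) : Prop :=
  ∃ a b, x = some a ∧ y = some b ∧ ∀ p q, a p q ≤ b p q

/-- `T` is a test set for `(Idl, ≺, φ)`: a finite subset of `Mat_≺ Idl` such that for every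
`M ∈ Mat_≺ Idl` with `φ(M) ≠ ∅` there is `N ∈ T` with `φ(N) ≠ ∅`, `z^N ∣ z^M` and
`z^{φ(N)} ∣ z^{φ(M)}`. -/
def IsTestSet (ord : TermOrder (Fin m × Fin n)) (Idl : Ideal (MvPolynomial (Fin m × Fin n) ℂ))
    (φ : Matrix (Fin m) (Fin n) ℕ → Option (Matrix (Fin m) (Fin n) ℕ))
    (T : Set (Matrix (Fin m) (Fin n) ℕ)) : Prop :=
  T.Finite ∧ T ⊆ matLT ord Idl ∧
  ∀ M ∈ matLT ord Idl, (∃ M', φ M = some M') →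
    ∃ N ∈ T, (∀ p q, N p q ≤ M p q) ∧ OptDvd (φ N) (φ M)

/-- `T` is a test set that is minimal with respect to containment among all test sets. -/
def MinimalTestSet (ord : TermOrder (Fin m × Fin n))
    (Idl : Ideal (MvPolynomial (Fin m × Fin n) ℂ))
    (φ : Matrix (Fin m) (Fin n) ℕ → Option (Matrix (Fin m) (Fin n) ℕ))
    (T : Set (Matrix (Fin m) (Fin n) ℕ)) : Prop :=
  IsTestSet ord Idl φ T ∧ ∀ T', IsTestSet ord Idl φ T' → T' ⊆ T → T' = T

/-- The entry of `M` in 1-based row `r` and column `c` (0 outside the matrix). -/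
def entRow (M : Matrix (Fin m) (Fin n) ℕ) (r : ℕ) (c : Fin n) : ℕ :=
  if h : 1 ≤ r ∧ r ≤ m then M ⟨r - 1, by omega⟩ c else 0

/-- The generic `d × d` minor of `Z` with row set `r` and column set `c`. -/
noncomputable def genMinor (m n d : ℕ) (r : Fin d → Fin m) (c : Fin d → Fin n) :
    MvPolynomial (Fin m × Fin n) ℂ :=
  (Matrix.of fun i j : Fin d => MvPolynomial.X (r i, c j)).det

/-- The exponent vector of the antidiagonal term of the minor with rows `r`, columns `c`. -/
noncomputable def antidiagExp (m n d : ℕ) (r : Fin d → Fin m) (c : Fin d → Fin n) :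
    (Fin m × Fin n) →₀ ℕ :=
  ∑ i : Fin d, Finsupp.single (r i, c i.rev) 1

/-- `ord` is an antidiagonal term order: the lead term of every minor of the generic
matrix `Z` is its antidiagonal term. -/
def IsAntidiagonalOrder (m n : ℕ) (ord : TermOrder (Fin m × Fin n)) : Prop :=
  ∀ d, 0 < d → ∀ (r : Fin d → Fin m) (c : Fin d → Fin n), StrictMono r → StrictMono c →
    IsInitExp ord (genMinor m n d r c) (antidiagExp m n d r c)

/-- All `d × d` minors of the contiguous submatrix `[a,a'] × [b,b']` of `Z`
(1-based bounds). -/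
def minorsOfSub (m n : ℕ) (a a' b b' d : ℕ) : Set (MvPolynomial (Fin m × Fin n) ℂ) :=
  {p | ∃ (r : Fin d → Fin m) (c : Fin d → Fin n), StrictMono r ∧ StrictMono c ∧
    (∀ i, a ≤ (r i).1 + 1 ∧ (r i).1 + 1 ≤ a') ∧
    (∀ j, b ≤ (c j).1 + 1 ∧ (c j).1 + 1 ≤ b') ∧ p = genMinor m n d r c}

/-- `G` is a Gröbner basis of `Idl` with respect to `ord`:
`G ⊆ Idl` and `init_≺ Idl = ⟨init_≺ g : g ∈ G⟩`. -/
def IsGroebnerBasis (ord : TermOrder (Fin m × Fin n))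
    (Idl : Ideal (MvPolynomial (Fin m × Fin n) ℂ))
    (G : Set (MvPolynomial (Fin m × Fin n) ℂ)) : Prop :=
  G ⊆ (Idl : Set (MvPolynomial (Fin m × Fin n) ℂ)) ∧
  initialIdeal ord Idl =
    Ideal.span {p | ∃ g ∈ G, ∃ u, IsInitExp ord g u ∧ p = MvPolynomial.monomial u (1 : ℂ)}

/-- The priority of the variable `z_{ij}` in the variable order
`z_{1n} ≻ z_{1,n-1} ≻ ⋯ ≻ z_{11} ≻ z_{2n} ≻ ⋯ ≻ z_{m1}` (smaller rank = larger variable). -/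
def lexRank (m n : ℕ) (p : Fin m × Fin n) : ℕ := p.1.1 * n + (n - 1 - p.2.1)

/-- `ord` is the (antidiagonal) lexicographic term order determined by the variable order
`z_{1n} ≻ z_{1,n-1} ≻ ⋯ ≻ z_{11} ≻ z_{2n} ≻ ⋯ ≻ z_{m1}`. -/
def IsAntidiagLex (m n : ℕ) (ord : TermOrder (Fin m × Fin n)) : Prop :=
  ∀ u v, ord.le u v ↔
    u = v ∨ ∃ p, u p < v p ∧ ∀ q, lexRank m n q < lexRank m n p → u q = v q

/-- The rank function `r_v(i,j) = #{k ≤ i : v(k) ≤ j}` (1-based), at 0-based `(i,j)`. -/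
def rankP (N : ℕ) (v : Equiv.Perm (Fin N)) (i j : Fin N) : ℕ :=
  (Finset.univ.filter fun k : Fin N => k ≤ i ∧ v k ≤ j).card

/-- The antidiagonal drift `drift_v(i,j) = i + j - 1 - r_v(i,j)` (1-based), at 0-based
`(i,j)`. -/
def driftP (N : ℕ) (v : Equiv.Perm (Fin N)) (i j : Fin N) : ℕ :=
  i.1 + j.1 + 1 - rankP N v i j

/-- The specialized matrix `Z_v`: ones on the permutation positions, zeros southwest-ward
of them (positions `(i,j)` with `j > v(i)` or `i > v⁻¹(j)`), variables elsewhere. -/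
noncomputable def Zv (N : ℕ) (v : Equiv.Perm (Fin N)) :
    Matrix (Fin N) (Fin N) (MvPolynomial (Fin N × Fin N) ℂ) :=
  Matrix.of fun i j =>
    if v i = j then 1 else if v i < j ∨ v.symm j < i then 0 else MvPolynomial.X (i, j)

/-- The `k`-th basic minor `Δ_v^{(k)}`: the determinant of the northwest-justified
`k × k` submatrix of `Z_v`. -/
noncomputable def basicMinor (N k : ℕ) (hk : k ≤ N) (v : Equiv.Perm (Fin N)) :
    MvPolynomial (Fin N × Fin N) ℂ :=
  (Matrix.of fun i j : Fin k => Zv N v (Fin.castLE hk i) (Fin.castLE hk j)).det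

/-- The one-coordinate index-deletion map underlying `φ_{i,j}`: delete the index `i`
from `[n+1]`, renumbering the indices above `i` down by one. -/
def delIdx {N : ℕ} (i a : Fin (N + 1)) (h : a ≠ i) : Fin N :=
  if hlt : a.1 < i.1 then ⟨a.1, by have := i.isLt; omega⟩
  else ⟨a.1 - 1, by
    have h1 := a.isLt
    have h2 : a.1 ≠ i.1 := fun hh => h (Fin.ext hh)
    omega⟩

/-- Row insertion `T ← x` for a tableau given as its list of rows (top to bottom). -/
def rowInsert : List (List ℕ) → ℕ → List (List ℕ)
  | [], x => [[x]]
  | row :: rest, x =>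
    match row.findIdx? (fun y => decide (x < y)) with
    | none => (row ++ [x]) :: rest
    | some k => (row.set k x) :: rowInsert rest (row.getD k 0)

/-- The insertion tableau `tab(w)` of a word `w`. -/
def tab (w : List ℕ) : List (List ℕ) := w.foldl rowInsert []

/-- The `RSK` correspondence: `RSK(M) = (tab(row(M)), tab(col(M)))`. -/
def RSKmap (M : Matrix (Fin m) (Fin n) ℕ) : List (List ℕ) × List (List ℕ) :=
  (tab (rowWord M), tab (colWord M))

/-- The column reading word of a tableau, with each letter labelled by its box `(row, col)`:
entries are read along columns bottom-to-top, left-to-right. -/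
def tabWordLbl (T : List (List ℕ)) : List (ℕ × (ℕ × ℕ)) :=
  (List.range (T.getD 0 []).length).flatMap fun j =>
    ((List.range T.length).reverse).filterMap fun r =>
      ((T.getD r [])[j]?).map fun x => (x, (r, j))

/-- The column reading word `word(T)` (columns bottom-to-top, left-to-right). -/
def tabWord (T : List (List ℕ)) : List ℕ := (tabWordLbl T).map Prod.fst

/-- Replace the entry of `T` in box `(r, j)` by `v`. -/
def setBox (T : List (List ℕ)) (r j v : ℕ) : List (List ℕ) :=
  T.set r ((T.getD r []).set j v)

/-- The tableau crystal lowering operator `f_i`: change the `i` of `T` corresponding to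
the rightmost unmatched `)` of `bracket_i(word(T))` into an `i + 1` (or `∅`). -/
def fTab (i : ℕ) (T : List (List ℕ)) : Option (List (List ℕ)) :=
  (lastUnmatched i (i + 1) (tabWordLbl T) 0).map fun p => setBox T p.1 p.2 (i + 1)

/-- The tableau crystal raising operator `e_i`: change the `i + 1` of `T` corresponding to
the leftmost unmatched `(` of `bracket_i(word(T))` into an `i` (or `∅`). -/
def eTab (i : ℕ) (T : List (List ℕ)) : Option (List (List ℕ)) :=
  (lastUnmatched (i + 1) i (tabWordLbl T).reverse 0).map fun p => setBox T p.1 p.2 i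

/-- `T` (a list of rows, top to bottom) is a semistandard Young tableau with positive
integer entries. -/
def IsSSYT (T : List (List ℕ)) : Prop :=
  (∀ r ∈ T, r ≠ []) ∧
  (∀ r ∈ T, List.Chain' (· ≤ ·) r) ∧
  (∀ i, (T.getD (i + 1) []).length ≤ (T.getD i []).length) ∧
  (∀ i j, j < (T.getD (i + 1) []).length →
    (T.getD i []).getD j 0 < (T.getD (i + 1) []).getD j 0) ∧
  (∀ r ∈ T, ∀ x ∈ r, 1 ≤ x)

/-- `w` is `[a,b]`-ballot: every initial segment contains at least as many `i`s as
`(i+1)`s, for each `i ∈ [a, b-1]`. -/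
def IsBallot (a b : ℕ) (w : List ℕ) : Prop :=
  ∀ k i, a ≤ i → i + 1 ≤ b → (w.take k).count (i + 1) ≤ (w.take k).count i

/-- `T` is an `[a,b]`-Littlewood–Richardson tableau: `revword(T)|_{[a,b]}` is
`[a,b]`-ballot. -/
def IsLRInterval (a b : ℕ) (T : List (List ℕ)) : Prop :=
  IsBallot a b (((tabWord T).reverse).filter fun x => decide (a ≤ x ∧ x ≤ b))

/-- `T` is `𝐊`-LR for `𝐊 = {0 = k_0 < ⋯ < k_t = ℓ}`: `T` is `[k_{α-1}+1, k_α]`-LR for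
every pair of consecutive elements of `𝐊`. -/
def IsKLR (K : Finset ℕ) (T : List (List ℕ)) : Prop :=
  ∀ a b, a ∈ K → b ∈ K → a < b → (∀ x ∈ K, ¬(a < x ∧ x < b)) → IsLRInterval (a + 1) b T

/-- The `[a,b]`-width of a word: the maximum length of a strictly decreasing subsequence
of the restriction `u|_{[a,b]}`. -/
noncomputable def widthInterval (a b : ℕ) (u : List ℕ) : ℕ :=
  sSup {d | ∃ s : List ℕ, s.Sublist (u.filter fun x => decide (a ≤ x ∧ x ≤ b)) ∧
    List.Chain' (· > ·) s ∧ s.length = d}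

/-- The entry of `T` in box `p = (row, col)`. -/
def tabEntry (T : List (List ℕ)) (p : ℕ × ℕ) : ℕ := (T.getD p.1 []).getD p.2 0

/-- The `[a,b]`-width of a tableau: the maximum length of an `[a,b]`-antidiagonal, i.e. a
sequence of boxes of `T` from distinct rows with entries in `[a,b]`, each box weakly east
and strictly north of the previous one, whose entries strictly decrease read bottom to
top. -/
noncomputable def tabWidth (a b : ℕ) (T : List (List ℕ)) : ℕ :=
  sSup {d | ∃ L : List (ℕ × ℕ),
    (∀ p ∈ L, p.1 < T.length ∧ p.2 < (T.getD p.1 []).length ∧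
      a ≤ tabEntry T p ∧ tabEntry T p ≤ b) ∧
    List.Chain' (fun p q => q.1 < p.1 ∧ p.2 ≤ q.2 ∧ tabEntry T q < tabEntry T p) L ∧
    L.length = d}

/-- The maximum length of a sequence of nonzero entries of `M` in antidiagonal position
(row indices strictly decreasing, column indices strictly increasing along the sequence)
with all (1-based) row indices in `[a,b]`. -/
noncomputable def rowAntidiagWidth (a b : ℕ) (M : Matrix (Fin m) (Fin n) ℕ) : ℕ :=
  sSup {d | ∃ L : List (Fin m × Fin n),
    (∀ p ∈ L, M p.1 p.2 ≠ 0 ∧ a ≤ p.1.1 + 1 ∧ p.1.1 + 1 ≤ b) ∧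
    List.Chain' (fun p q => q.1 < p.1 ∧ p.2 < q.2) L ∧
    L.length = d}

/-- As `rowAntidiagWidth`, but with all (1-based) column indices in `[a,b]`. -/
noncomputable def colAntidiagWidth (a b : ℕ) (M : Matrix (Fin m) (Fin n) ℕ) : ℕ :=
  sSup {d | ∃ L : List (Fin m × Fin n),
    (∀ p ∈ L, M p.1 p.2 ≠ 0 ∧ a ≤ p.2.1 + 1 ∧ p.2.1 + 1 ≤ b) ∧
    List.Chain' (fun p q => q.1 < p.1 ∧ p.2 < q.2) L ∧
    L.length = d}

/-- An elementary Knuth transformation: `prq ≡ rpq` for `p ≤ q < r`, and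
`qpr ≡ qrp` for `p < q ≤ r`. -/
inductive KnuthStep : List ℕ → List ℕ → Prop
  | swap1 (u v : List ℕ) (p q r : ℕ) (h1 : p ≤ q) (h2 : q < r) :
      KnuthStep (u ++ p :: r :: q :: v) (u ++ r :: p :: q :: v)
  | swap2 (u v : List ℕ) (p q r : ℕ) (h1 : p < q) (h2 : q ≤ r) :
      KnuthStep (u ++ q :: p :: r :: v) (u ++ q :: r :: p :: v)

/-- Knuth equivalence of words. -/
def KnuthEquiv : List ℕ → List ℕ → Prop := Relation.EqvGen KnuthStep

end GCS


-- ===== auxiliary development =====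
namespace GCS


/-- number of letters `x` in a labelled word -/
def cnt {β : Type} (x : ℕ) (l : List (ℕ × β)) : ℕ := l.countP (fun p => p.1 = x)

@[simp] lemma cnt_nil {β : Type} (x : ℕ) : cnt x ([] : List (ℕ × β)) = 0 := rfl

lemma cnt_cons {β : Type} (x : ℕ) (p : ℕ × β) (l : List (ℕ × β)) :
    cnt x (p :: l) = cnt x l + (if p.1 = x then 1 else 0) := by
  simp [cnt, List.countP_cons]

@[simp] lemma cnt_append {β : Type} (x : ℕ) (l₁ l₂ : List (ℕ × β)) :
    cnt x (l₁ ++ l₂) = cnt x l₁ + cnt x l₂ := by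
  simp [cnt, List.countP_append]

lemma lastUnmatched_none_balance {β : Type} {cl op : ℕ} (hne : cl ≠ op) :
    ∀ (w : List (ℕ × β)) (o : ℕ), lastUnmatched cl op w o = none →
      ∀ p, p <+: w → cnt cl p ≤ cnt op p + o := by
  intro w
  induction w with
  | nil => intro o _ p hp; simp [List.prefix_nil.mp hp]
  | cons a rest ih =>
    intro o hw p hp
    obtain ⟨x, lbl⟩ := a
    rcases p with _ | ⟨q, p'⟩
    · simp
    · rw [List.cons_prefix_cons] at hp
      obtain ⟨rfl, hp'⟩ := hp
      rw [cnt_cons, cnt_cons]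
      by_cases hx : x = cl
      · simp only [lastUnmatched, if_pos hx] at hw
        rcases Nat.eq_zero_or_pos o with rfl | ho
        · rw [if_pos rfl] at hw
          rcases h : lastUnmatched cl op rest 0 with _ | y <;> rw [h] at hw <;> simp at hw
        · rw [if_neg ho.ne'] at hw
          have := ih (o - 1) hw p' hp'
          have hxop : ¬ x = op := by rw [hx]; exact hne
          simp only [if_pos hx, if_neg hxop]
          omega
      · by_cases hy : x = op
        · simp only [lastUnmatched, if_neg hx, if_pos hy] at hw
          have := ih (o + 1) hw p' hp'
          simp only [if_pos hy, if_neg hx]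
          omega
        · simp only [lastUnmatched, if_neg hx, if_neg hy] at hw
          have := ih o hw p' hp'
          simp only [if_neg hx, if_neg hy]
          omega

lemma lastUnmatched_some_split {β : Type} {cl op : ℕ} (hne : cl ≠ op) :
    ∀ (w : List (ℕ × β)) (o : ℕ) (lbl : β), lastUnmatched cl op w o = some lbl →
      ∃ u v, w = u ++ (cl, lbl) :: v ∧ ∀ p, p <+: v → cnt cl p ≤ cnt op p := by
  intro w
  induction w with
  | nil => intro o lbl h; simp [lastUnmatched] at h
  | cons a rest ih =>
    intro o lbl hw
    obtain ⟨x, l⟩ := a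
    by_cases hx : x = cl
    · simp only [lastUnmatched, if_pos hx] at hw
      rcases Nat.eq_zero_or_pos o with rfl | ho
      · rw [if_pos rfl] at hw
        rcases hrec : lastUnmatched cl op rest 0 with _ | y
        · rw [hrec] at hw; simp only [Option.some.injEq] at hw
          subst hw; subst hx
          refine ⟨[], rest, rfl, ?_⟩
          intro p hp
          have := lastUnmatched_none_balance hne rest 0 hrec p hp
          omega
        · rw [hrec] at hw; simp only [Option.some.injEq] at hw; subst hw
          obtain ⟨u, v, huv, hbal⟩ := ih 0 _ hrec
          exact ⟨(x, l) :: u, v, by rw [huv]; rfl, hbal⟩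
      · rw [if_neg ho.ne'] at hw
        obtain ⟨u, v, huv, hbal⟩ := ih (o - 1) lbl hw
        exact ⟨(x, l) :: u, v, by rw [huv]; rfl, hbal⟩
    · by_cases hy : x = op
      · simp only [lastUnmatched, if_neg hx, if_pos hy] at hw
        obtain ⟨u, v, huv, hbal⟩ := ih (o + 1) lbl hw
        exact ⟨(x, l) :: u, v, by rw [huv]; rfl, hbal⟩
      · simp only [lastUnmatched, if_neg hx, if_neg hy] at hw
        obtain ⟨u, v, huv, hbal⟩ := ih o lbl hw
        exact ⟨(x, l) :: u, v, by rw [huv]; rfl, hbal⟩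

end GCS

namespace GCS

lemma flatMap_eq_append_cons {γ β' : Type*} :
    ∀ (L : List γ) (F : γ → List β') (u v : List β') (x : β'),
      L.flatMap F = u ++ x :: v →
      ∃ L₁ c L₂ u₀ v₀, L = L₁ ++ c :: L₂ ∧ F c = u₀ ++ x :: v₀ ∧
        u = L₁.flatMap F ++ u₀ ∧ v = v₀ ++ L₂.flatMap F := by
  intro L
  induction L with
  | nil =>
    intro F u v x h
    simp only [List.flatMap_nil] at h
    exact absurd h (by simp)
  | cons c L' ih =>
    intro F u v x h
    rw [List.flatMap_cons] at h
    rcases List.append_eq_append_iff.mp h with ⟨a', ha1, ha2⟩ | ⟨c', hc1, hc2⟩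
    · -- u = F c ++ a', L'.flatMap F = a' ++ x :: v
      obtain ⟨L₁, c₁, L₂, u₀, v₀, hL, hF, hu, hv⟩ := ih F a' v x ha2
      exact ⟨c :: L₁, c₁, L₂, u₀, v₀, by rw [hL]; rfl, hF,
        by rw [ha1, hu, List.flatMap_cons, List.append_assoc], hv⟩
    · -- F c = u ++ c', x :: v = c' ++ L'.flatMap F
      rcases c' with _ | ⟨y, t⟩
      · -- x :: v = L'.flatMap F
        obtain ⟨L₁, c₁, L₂, u₀, v₀, hL, hF, hu, hv⟩ := ih F [] v x hc2.symm
        refine ⟨c :: L₁, c₁, L₂, u₀, v₀, by rw [hL]; rfl, hF, ?_, hv⟩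
        rw [List.flatMap_cons, List.append_assoc, ← hu]
        simpa using hc1.symm
      · -- c' = y :: t with y = x, v = t ++ L'.flatMap F
        simp only [List.cons_append, List.cons.injEq] at hc2
        obtain ⟨rfl, hv⟩ := hc2
        exact ⟨[], c, L', u, t, rfl, hc1, by simp, hv⟩

variable {m n : ℕ}

/-- the block of the row word corresponding to column `c` -/
def blk (M : Matrix (Fin m) (Fin n) ℕ) (c : Fin n) : List (ℕ × Fin n) :=
  (List.finRange m).flatMap fun r => List.replicate (M r c) (r.1 + 1, c)

lemma cnt_replicate {x y : ℕ} {c : Fin n} (k : ℕ) :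
    cnt x (List.replicate k (y, c)) = if y = x then k else 0 := by
  induction k with
  | zero => simp
  | succ k ihk => rw [List.replicate_succ, cnt_cons, ihk]; split <;> simp

lemma cnt_flatMap {γ : Type*} (x : ℕ) (L : List γ) (F : γ → List (ℕ × Fin n)) :
    cnt x (L.flatMap F) = (L.map fun a => cnt x (F a)).sum := by
  induction L with
  | nil => simp
  | cons a L ih => rw [List.flatMap_cons, cnt_append, ih]; simp

lemma cnt_rep_flatMap (M : Matrix (Fin m) (Fin n) ℕ) (x : ℕ) (c : Fin n) (R : List (Fin m)) :
    cnt x (R.flatMap fun r => List.replicate (M r c) (r.1 + 1, c))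
      = (R.map fun r => if r.1 + 1 = x then M r c else 0).sum := by
  rw [cnt_flatMap]
  congr 1
  apply List.map_congr_left
  intro r _
  rw [cnt_replicate]

lemma cnt_rep_flatMap_zero (M : Matrix (Fin m) (Fin n) ℕ) (x : ℕ) (c : Fin n)
    (R : List (Fin m)) (hx : ∀ r ∈ R, r.1 + 1 ≠ x) :
    cnt x (R.flatMap fun r => List.replicate (M r c) (r.1 + 1, c)) = 0 := by
  rw [cnt_rep_flatMap]
  apply List.sum_eq_zero
  intro y hy
  obtain ⟨r, hr, rfl⟩ := List.mem_map.mp hy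
  rw [if_neg (hx r hr)]

lemma cnt_blk (M : Matrix (Fin m) (Fin n) ℕ) (r : Fin m) (c : Fin n) :
    cnt (r.1 + 1) (blk M c) = M r c := by
  rw [blk, cnt_rep_flatMap]
  have : ∀ r' : Fin m, (if r'.1 + 1 = r.1 + 1 then M r' c else 0)
      = if r' = r then M r' c else 0 := by
    intro r'
    congr 1
    simp [Fin.ext_iff]
  simp only [this]
  rw [← Fin.sum_univ_def (fun r' => if r' = r then M r' c else 0)]
  simp

lemma mem_blk {M : Matrix (Fin m) (Fin n) ℕ} {x : ℕ} {c' c : Fin n}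
    (h : (x, c') ∈ blk M c) : c' = c ∧ ∃ r : Fin m, r.1 + 1 = x ∧ 0 < M r c := by
  rw [blk, List.mem_flatMap] at h
  obtain ⟨r, _, hmem⟩ := h
  rw [List.mem_replicate] at hmem
  obtain ⟨hk, heq⟩ := hmem
  obtain ⟨h1, h2⟩ := Prod.mk.injEq .. ▸ heq
  exact ⟨h2, r, h1.symm, Nat.pos_of_ne_zero (by simpa using hk)⟩

lemma finRange_split {k : ℕ} (a : Fin k) :
    ∃ L₁ L₂, List.finRange k = L₁ ++ a :: L₂ ∧ (∀ x ∈ L₁, x < a) ∧ (∀ x ∈ L₂, a < x) := by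
  obtain ⟨L₁, L₂, h⟩ := List.append_of_mem (List.mem_finRange a)
  have hpw := List.pairwise_lt_finRange k
  rw [h, List.pairwise_append] at hpw
  obtain ⟨_, h2, h3⟩ := hpw
  rw [List.pairwise_cons] at h2
  exact ⟨L₁, L₂, h, fun x hx => h3 x hx a (List.mem_cons_self), h2.1⟩

lemma list_sum_pos {γ : Type*} (L : List γ) (f : γ → ℕ) (h : 1 ≤ (L.map f).sum) :
    ∃ x ∈ L, 1 ≤ f x := by
  by_contra hc
  push_neg at hc
  have : (L.map f).sum = 0 := by
    apply List.sum_eq_zero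
    intro y hy
    obtain ⟨x, hx, rfl⟩ := List.mem_map.mp hy
    have := hc x hx
    omega
  omega

end GCS

namespace GCS
variable {m n : ℕ}


lemma rowWordLbl_eq (M : Matrix (Fin m) (Fin n) ℕ) :
    rowWordLbl M = (List.finRange n).flatMap (blk M) := rfl

lemma keyF (M : Matrix (Fin m) (Fin n) ℕ) (i₁ i₂ : Fin m) (h12 : i₂.1 = i₁.1 + 1)
    (c₀ : Fin n) (hlu : lastUnmatched (i₁.1 + 1) (i₁.1 + 1 + 1) (rowWordLbl M) 0 = some c₀) :
    1 ≤ M i₁ c₀ ∧ (M i₂ c₀ = 0 → ∀ c' : Fin n, c₀ < c' → 1 ≤ M i₁ c' →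
      ∃ c'' : Fin n, c₀ < c'' ∧ c'' < c' ∧ 1 ≤ M i₂ c'') := by
  have hne : (i₁.1 + 1) ≠ (i₁.1 + 1 + 1) := by omega
  obtain ⟨u, v, hw, hbal⟩ := lastUnmatched_some_split hne _ _ _ hlu
  rw [rowWordLbl_eq] at hw
  obtain ⟨L₁, c, L₂, u₀, v₀, hL, hF, hu, hv⟩ := flatMap_eq_append_cons _ _ _ _ _ hw
  have hmem : ((i₁.1 + 1 : ℕ), c₀) ∈ blk M c := by
    rw [hF]; exact List.mem_append_cons_self
  obtain ⟨rfl, r, hr1, hr2⟩ := mem_blk hmem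
  have hri : r = i₁ := Fin.ext (by omega)
  rw [hri] at hr2
  refine ⟨hr2, ?_⟩
  intro h0 c' hcc h1
  have hpw := List.pairwise_lt_finRange n
  rw [hL, List.pairwise_append] at hpw
  obtain ⟨hpw1, hpw2, hpw3⟩ := hpw
  rw [List.pairwise_cons] at hpw2
  have hc' : c' ∈ L₂ := by
    have hmf : c' ∈ List.finRange n := List.mem_finRange c'
    rw [hL] at hmf
    rcases List.mem_append.mp hmf with h | h
    · exact absurd (hpw3 c' h c₀ (List.mem_cons_self)) (lt_asymm hcc)
    · rcases List.mem_cons.mp h with h | h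
      · exact absurd h (ne_of_gt hcc)
      · exact h
  obtain ⟨B, C, hBC⟩ := List.append_of_mem hc'
  have hB : ∀ x ∈ B, c₀ < x ∧ x < c' := by
    intro x hx
    refine ⟨hpw2.1 x (hBC ▸ List.mem_append_left _ hx), ?_⟩
    have hpwL₂ := hpw2.2
    rw [hBC, List.pairwise_append] at hpwL₂
    exact hpwL₂.2.2 x hx c' (List.mem_cons_self)
  obtain ⟨R₁, R₂, hR, hR1, hR2⟩ := finRange_split i₁
  have hblk : blk M c' =
      (R₁.flatMap (fun r => List.replicate (M r c') (r.1 + 1, c'))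
        ++ List.replicate (M i₁ c') (i₁.1 + 1, c'))
      ++ R₂.flatMap (fun r => List.replicate (M r c') (r.1 + 1, c')) := by
    rw [blk, hR, List.flatMap_append, List.flatMap_cons]
    simp [List.append_assoc]
  have hpre : v₀ ++ B.flatMap (blk M)
      ++ (R₁.flatMap (fun r => List.replicate (M r c') (r.1 + 1, c'))
        ++ List.replicate (M i₁ c') (i₁.1 + 1, c')) <+: v := by
    refine ⟨R₂.flatMap (fun r => List.replicate (M r c') (r.1 + 1, c'))
      ++ C.flatMap (blk M), ?_⟩
    rw [hv, hBC, List.flatMap_append, List.flatMap_cons, hblk]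
    simp [List.append_assoc]
  have hb := hbal _ hpre
  rw [cnt_append, cnt_append, cnt_append, cnt_append, cnt_append, cnt_append] at hb
  have hrep1 : cnt (i₁.1 + 1) (List.replicate (M i₁ c') (i₁.1 + 1, c')) = M i₁ c' := by
    rw [cnt_replicate]; simp
  have hrep2 : cnt (i₁.1 + 1 + 1) (List.replicate (M i₁ c') (i₁.1 + 1, c')) = 0 := by
    rw [cnt_replicate]; simp
  have hR1z : cnt (i₁.1 + 1 + 1)
      (R₁.flatMap (fun r => List.replicate (M r c') (r.1 + 1, c'))) = 0 := by
    apply cnt_rep_flatMap_zero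
    intro r hr
    have := hR1 r hr
    simp only [Fin.lt_def] at this
    omega
  have hv₀ : cnt (i₁.1 + 1 + 1) v₀ ≤ M i₂ c₀ := by
    have hsuf : v₀ <:+ blk M c₀ := ⟨u₀ ++ [((i₁.1 + 1 : ℕ), c₀)], by rw [hF]; simp⟩
    have hle := List.Sublist.countP_le (p := fun p => decide (p.1 = i₁.1 + 1 + 1)) hsuf.sublist
    have hcb : cnt (i₁.1 + 1 + 1) (blk M c₀) = M i₂ c₀ := by
      rw [show i₁.1 + 1 + 1 = i₂.1 + 1 by omega, cnt_blk]
    rw [← hcb]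
    exact hle
  have hBsum : cnt (i₁.1 + 1 + 1) (B.flatMap (blk M)) = (B.map fun c'' => M i₂ c'').sum := by
    rw [cnt_flatMap]
    congr 1
    apply List.map_congr_left
    intro c'' _
    rw [show i₁.1 + 1 + 1 = i₂.1 + 1 by omega, cnt_blk]
  have hsum : 1 ≤ (B.map fun c'' => M i₂ c'').sum := by omega
  obtain ⟨c'', hc''B, hc''⟩ := list_sum_pos _ _ hsum
  exact ⟨c'', (hB c'' hc''B).1, (hB c'' hc''B).2, hc''⟩

lemma keyE (M : Matrix (Fin m) (Fin n) ℕ) (i₁ i₂ : Fin m) (h12 : i₂.1 = i₁.1 + 1)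
    (c₀ : Fin n)
    (hlu : lastUnmatched (i₁.1 + 1 + 1) (i₁.1 + 1) (rowWordLbl M).reverse 0 = some c₀) :
    1 ≤ M i₂ c₀ ∧ (M i₁ c₀ = 0 → ∀ c' : Fin n, c' < c₀ → 1 ≤ M i₂ c' →
      ∃ c'' : Fin n, c' < c'' ∧ c'' < c₀ ∧ 1 ≤ M i₁ c'') := by
  have hne : (i₁.1 + 1 + 1) ≠ (i₁.1 + 1) := by omega
  obtain ⟨u, v, hw, hbal⟩ := lastUnmatched_some_split hne _ _ _ hlu
  have hw' : rowWordLbl M = v.reverse ++ ((i₁.1 + 1 + 1 : ℕ), c₀) :: u.reverse := by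
    have h2 := congrArg List.reverse hw
    rw [List.reverse_reverse] at h2
    rw [h2]
    simp
  have hbal' : ∀ s, s <:+ v.reverse → cnt (i₁.1 + 1 + 1) s ≤ cnt (i₁.1 + 1) s := by
    intro s hs
    have hsp : s.reverse <+: v := by
      rw [← List.reverse_reverse v]
      exact List.reverse_prefix.mpr hs
    have hh := hbal s.reverse hsp
    simpa [cnt, List.countP_reverse] using hh
  rw [rowWordLbl_eq] at hw'
  obtain ⟨L₁, c, L₂, u₀, v₀, hL, hF, hu, hv⟩ := flatMap_eq_append_cons _ _ _ _ _ hw'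
  have hmem : ((i₁.1 + 1 + 1 : ℕ), c₀) ∈ blk M c := by
    rw [hF]; exact List.mem_append_cons_self
  obtain ⟨rfl, r, hr1, hr2⟩ := mem_blk hmem
  have hri : r = i₂ := Fin.ext (by omega)
  rw [hri] at hr2
  refine ⟨hr2, ?_⟩
  intro h0 c' hcc h1
  have hpw := List.pairwise_lt_finRange n
  rw [hL, List.pairwise_append] at hpw
  obtain ⟨hpw1, hpw2, hpw3⟩ := hpw
  rw [List.pairwise_cons] at hpw2
  have hc' : c' ∈ L₁ := by
    have hmf : c' ∈ List.finRange n := List.mem_finRange c'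
    rw [hL] at hmf
    rcases List.mem_append.mp hmf with h | h
    · exact h
    · rcases List.mem_cons.mp h with h | h
      · exact absurd h (ne_of_lt hcc)
      · exact absurd (hpw2.1 c' h) (lt_asymm hcc)
  obtain ⟨A, B, hAB⟩ := List.append_of_mem hc'
  have hB : ∀ x ∈ B, c' < x ∧ x < c₀ := by
    intro x hx
    constructor
    · have hpwL₁ := hpw1
      rw [hAB, List.pairwise_append, List.pairwise_cons] at hpwL₁
      exact hpwL₁.2.1.1 x hx
    · exact hpw3 x (hAB ▸ List.mem_append_right _ (List.mem_cons_of_mem _ hx)) c₀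
        (List.mem_cons_self)
  obtain ⟨R₁, R₂, hR, hR1, hR2⟩ := finRange_split i₂
  have hblk : blk M c' =
      R₁.flatMap (fun r => List.replicate (M r c') (r.1 + 1, c'))
      ++ (List.replicate (M i₂ c') (i₂.1 + 1, c')
        ++ R₂.flatMap (fun r => List.replicate (M r c') (r.1 + 1, c'))) := by
    rw [blk, hR, List.flatMap_append, List.flatMap_cons]
  have hsuf : (List.replicate (M i₂ c') (i₂.1 + 1, c')
      ++ R₂.flatMap (fun r => List.replicate (M r c') (r.1 + 1, c')))
      ++ B.flatMap (blk M) ++ u₀ <:+ v.reverse := by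
    refine ⟨A.flatMap (blk M)
      ++ R₁.flatMap (fun r => List.replicate (M r c') (r.1 + 1, c')), ?_⟩
    rw [hu, hAB, List.flatMap_append, List.flatMap_cons, hblk]
    simp [List.append_assoc]
  have hb := hbal' _ hsuf
  rw [cnt_append, cnt_append, cnt_append, cnt_append, cnt_append, cnt_append] at hb
  have hrep1 : cnt (i₁.1 + 1 + 1) (List.replicate (M i₂ c') (i₂.1 + 1, c')) = M i₂ c' := by
    rw [cnt_replicate]; simp [h12]
  have hrep2 : cnt (i₁.1 + 1) (List.replicate (M i₂ c') (i₂.1 + 1, c')) = 0 := by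
    rw [cnt_replicate]; simp; omega
  have hR2z : cnt (i₁.1 + 1)
      (R₂.flatMap (fun r => List.replicate (M r c') (r.1 + 1, c'))) = 0 := by
    apply cnt_rep_flatMap_zero
    intro r hr
    have := hR2 r hr
    simp only [Fin.lt_def] at this
    omega
  have hu₀ : cnt (i₁.1 + 1) u₀ ≤ M i₁ c₀ := by
    have hpre : u₀ <+: blk M c₀ := ⟨((i₁.1 + 1 + 1 : ℕ), c₀) :: v₀, by rw [hF]⟩
    have hle := List.Sublist.countP_le (p := fun p => decide (p.1 = i₁.1 + 1)) hpre.sublist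
    have hcb : cnt (i₁.1 + 1) (blk M c₀) = M i₁ c₀ := by rw [cnt_blk]
    rw [← hcb]
    exact hle
  have hBsum : cnt (i₁.1 + 1) (B.flatMap (blk M)) = (B.map fun c'' => M i₁ c'').sum := by
    rw [cnt_flatMap]
    congr 1
    apply List.map_congr_left
    intro c'' _
    rw [cnt_blk]
  have hsum : 1 ≤ (B.map fun c'' => M i₁ c'').sum := by omega
  obtain ⟨c'', hc''B, hc''⟩ := list_sum_pos _ _ hsum
  exact ⟨c'', (hB c'' hc''B).1, (hB c'' hc''B).2, hc''⟩

end GCS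

namespace GCS
variable {m n : ℕ}


/-- an antidiagonal of `d` positive entries in the rectangle `[a,a'] × [b,b']` -/
def HasAnti (M : Matrix (Fin m) (Fin n) ℕ) (a a' b b' d : ℕ) : Prop :=
  ∃ (r : Fin d → Fin m) (c : Fin d → Fin n), StrictMono r ∧ StrictAnti c ∧
    (∀ j, a ≤ (r j).1 + 1 ∧ (r j).1 + 1 ≤ a') ∧
    (∀ j, b ≤ (c j).1 + 1 ∧ (c j).1 + 1 ≤ b') ∧
    ∀ j, 0 < M (r j) (c j)

lemma strictMonoUpdate {d : ℕ} {α : Type*} [LinearOrder α] {r : Fin d → α}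
    (hr : StrictMono r) {j₀ : Fin d} {x : α} (hlow : ∀ j, j < j₀ → r j < x)
    (hhigh : ∀ j, j₀ < j → x < r j) : StrictMono (Function.update r j₀ x) := by
  intro p q hpq
  by_cases hp : p = j₀
  · subst hp
    rw [Function.update_self, Function.update_of_ne (ne_of_gt hpq)]
    exact hhigh q hpq
  · by_cases hq : q = j₀
    · subst hq
      rw [Function.update_self, Function.update_of_ne hp]
      exact hlow p hpq
    · rw [Function.update_of_ne hp, Function.update_of_ne hq]
      exact hr hpq

lemma strictAntiUpdate {d : ℕ} {α : Type*} [LinearOrder α] {r : Fin d → α}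
    (hr : StrictAnti r) {j₀ : Fin d} {x : α} (hlow : ∀ j, j < j₀ → x < r j)
    (hhigh : ∀ j, j₀ < j → r j < x) : StrictAnti (Function.update r j₀ x) := by
  intro p q hpq
  by_cases hp : p = j₀
  · subst hp
    rw [Function.update_self, Function.update_of_ne (ne_of_gt hpq)]
    exact hhigh q hpq
  · by_cases hq : q = j₀
    · subst hq
      rw [Function.update_self, Function.update_of_ne hp]
      exact hlow p hpq
    · rw [Function.update_of_ne hp, Function.update_of_ne hq]
      exact hr hpq

lemma hasAnti_transpose_of {M : Matrix (Fin m) (Fin n) ℕ} {a a' b b' d : ℕ}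
    (h : HasAnti M a a' b b' d) : HasAnti M.transpose b b' a a' d := by
  obtain ⟨r, c, hr, hc, hra, hcb, hpos⟩ := h
  refine ⟨fun j => c (Fin.rev j), fun j => r (Fin.rev j), ?_, ?_, fun j => hcb _, fun j => hra _,
    fun j => hpos _⟩
  · intro p q hpq
    exact hc (Fin.rev_lt_rev.mpr hpq)
  · intro p q hpq
    exact hr (Fin.rev_lt_rev.mpr hpq)

lemma hasAnti_transpose_iff {M : Matrix (Fin m) (Fin n) ℕ} {a a' b b' d : ℕ} :
    HasAnti M.transpose b b' a a' d ↔ HasAnti M a a' b b' d := by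
  constructor
  · intro h
    simpa using hasAnti_transpose_of h
  · exact hasAnti_transpose_of

/-- Main surgery lemma for `frow`. -/
lemma surgeryF {M N : Matrix (Fin m) (Fin n) ℕ} {i : ℕ} (hi0 : 0 < i) (him : i < m)
    (hfr : frow i M = some N) {a a' b b' d : ℕ}
    (hrows : (a ≤ i ∧ i + 1 ≤ a') ∨ (¬(a ≤ i ∧ i ≤ a') ∧ ¬(a ≤ i + 1 ∧ i + 1 ≤ a')))
    (hN : HasAnti N a a' b b' d) : HasAnti M a a' b b' d := by
  rw [frow, Option.map_eq_some_iff] at hfr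
  obtain ⟨c₀, hlu, hNdef⟩ := hfr
  set i₁ : Fin m := ⟨i - 1, by omega⟩ with hi₁
  set i₂ : Fin m := ⟨i, him⟩ with hi₂
  have e1 : i₁.1 + 1 = i := by show i - 1 + 1 = i; omega
  have h12 : i₂.1 = i₁.1 + 1 := by show i = i - 1 + 1; omega
  have hlu' : lastUnmatched (i₁.1 + 1) (i₁.1 + 1 + 1) (rowWordLbl M) 0 = some c₀ := by
    rw [e1]; exact hlu
  have hkey := keyF M i₁ i₂ h12 c₀ hlu'
  have hNall : ∀ (x : Fin m) (y : Fin n), N x y =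
      if x = i₁ ∧ y = c₀ then M x y - 1
      else if x = i₂ ∧ y = c₀ then M x y + 1 else M x y := by
    intro x y
    rw [← hNdef]
    have hA : (x.1 + 1 = i ∧ y = c₀) ↔ (x = i₁ ∧ y = c₀) := by
      constructor
      · rintro ⟨h, rfl⟩
        exact ⟨Fin.ext (show x.1 = i - 1 by omega), rfl⟩
      · rintro ⟨rfl, rfl⟩
        exact ⟨by show i - 1 + 1 = i; omega, rfl⟩
    have hB : (x.1 + 1 = i + 1 ∧ y = c₀) ↔ (x = i₂ ∧ y = c₀) := by
      constructor
      · rintro ⟨h, rfl⟩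
        exact ⟨Fin.ext (show x.1 = i by omega), rfl⟩
      · rintro ⟨rfl, rfl⟩
        exact ⟨rfl, rfl⟩
    simp only [Matrix.of_apply, hA, hB]
  have hNe : ∀ (x : Fin m) (y : Fin n), ¬(x = i₁ ∧ y = c₀) → ¬(x = i₂ ∧ y = c₀) →
      N x y = M x y := by
    intro x y h1 h2
    rw [hNall, if_neg h1, if_neg h2]
  have h12ne : i₁ ≠ i₂ := by
    intro hh
    have := congrArg Fin.val hh
    simp only [hi₁, hi₂] at this
    omega
  have hN2 : N i₂ c₀ = M i₂ c₀ + 1 := by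
    rw [hNall, if_neg (by rintro ⟨hh, -⟩; exact h12ne hh.symm), if_pos ⟨rfl, rfl⟩]
  obtain ⟨r, c, hr, hc, hra, hcb, hpos⟩ := hN
  by_cases hused : ∃ j, r j = i₂ ∧ c j = c₀
  · -- the antidiagonal uses the increased entry
    obtain ⟨j₀, hj₀r, hj₀c⟩ := hused
    have hrowsL : a ≤ i ∧ i + 1 ≤ a' := by
      rcases hrows with h | h
      · exact h
      · exfalso
        have hv := hra j₀
        rw [hj₀r] at hv
        have hv' : a ≤ i + 1 ∧ i + 1 ≤ a' := by
          have : (i₂ : Fin m).1 = i := rfl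
          omega
        exact h.2 hv'
    have hnot : ∀ j, j ≠ j₀ → ¬(r j = i₁ ∧ c j = c₀) ∧ ¬(r j = i₂ ∧ c j = c₀) := by
      intro j hj
      constructor
      · rintro ⟨-, hcj⟩
        exact hj (hc.injective (hcj.trans hj₀c.symm))
      · rintro ⟨-, hcj⟩
        exact hj (hc.injective (hcj.trans hj₀c.symm))
    by_cases hM2 : 0 < M i₂ c₀
    · refine ⟨r, c, hr, hc, hra, hcb, fun j => ?_⟩
      rcases eq_or_ne j j₀ with rfl | hj
      · rw [hj₀r, hj₀c]; exact hM2
      · rw [← hNe _ _ (hnot j hj).1 (hnot j hj).2]; exact hpos j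
    · have hM20 : M i₂ c₀ = 0 := by omega
      set jp : Fin d := ⟨j₀.1 - 1, lt_of_le_of_lt (Nat.sub_le _ _) j₀.isLt⟩ with hjp
      by_cases hpred : j₀.1 ≠ 0 ∧ r jp = i₁
      · -- hard case : predecessor in row i₁
        obtain ⟨hj00, hpredEq⟩ := hpred
        have hjplt : jp < j₀ := by
          rw [Fin.lt_def]
          show j₀.1 - 1 < j₀.1
          omega
        have hcp : c₀ < c jp := by
          have := hc hjplt
          rwa [hj₀c] at this
        have hMp : 1 ≤ M i₁ (c jp) := by
          have hne1 : ¬(r jp = i₁ ∧ c jp = c₀) := by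
            rintro ⟨-, hh⟩; exact absurd hh (ne_of_gt hcp)
          have hne2 : ¬(r jp = i₂ ∧ c jp = c₀) := by
            rintro ⟨-, hh⟩; exact absurd hh (ne_of_gt hcp)
          have hv := hpos jp
          rwa [hNe _ _ hne1 hne2, hpredEq] at hv
        obtain ⟨c'', hc''1, hc''2, hc''3⟩ := hkey.2 hM20 (c jp) hcp hMp
        refine ⟨r, Function.update c j₀ c'', hr, ?_, hra, ?_, ?_⟩
        · apply strictAntiUpdate hc
          · intro j hj
            have hjle : j ≤ jp := by
              rw [Fin.le_def]
              have := Fin.lt_def.mp hj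
              show j.1 ≤ j₀.1 - 1
              omega
            exact lt_of_lt_of_le hc''2 (hc.antitone hjle)
          · intro j hj
            calc c j < c j₀ := hc hj
            _ = c₀ := hj₀c
            _ < c'' := hc''1
        · intro j
          rcases eq_or_ne j j₀ with rfl | hj
          · rw [Function.update_self]
            have h1 := (hcb j).1
            have h2 := (hcb jp).2
            rw [hj₀c] at h1
            have hv1 : c₀.1 < c''.1 := hc''1
            have hv2 : c''.1 < (c jp).1 := hc''2
            omega
          · rw [Function.update_of_ne hj]
            exact hcb j
        · intro j
          rcases eq_or_ne j j₀ with rfl | hj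
          · rw [Function.update_self, hj₀r]
            exact hc''3
          · rw [Function.update_of_ne hj, ← hNe _ _ (hnot j hj).1 (hnot j hj).2]
            exact hpos j
      · -- no predecessor in row i₁ : replace (i₂, c₀) by (i₁, c₀)
        have hM1 : 1 ≤ M i₁ c₀ := hkey.1
        refine ⟨Function.update r j₀ i₁, c, ?_, hc, ?_, hcb, ?_⟩
        · apply strictMonoUpdate hr
          · intro j hj
            have hj0 : j₀.1 ≠ 0 := by
              have := Fin.lt_def.mp hj
              omega
            have hjle : j ≤ jp := by
              rw [Fin.le_def]
              have := Fin.lt_def.mp hj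
              show j.1 ≤ j₀.1 - 1
              omega
            have hle : r j ≤ r jp := hr.monotone hjle
            have hne : r jp ≠ i₁ := fun hh => hpred ⟨hj0, hh⟩
            have hlt2 : r jp < r j₀ := hr (by rw [Fin.lt_def]; show j₀.1 - 1 < j₀.1; omega)
            rw [hj₀r] at hlt2
            have hv1 : (r jp).1 < i := hlt2
            have hv2 : (r jp).1 ≠ i - 1 := fun hh => hne (Fin.ext hh)
            have hv3 : r jp < i₁ := by
              rw [Fin.lt_def]
              show _ < i - 1
              omega
            exact lt_of_le_of_lt hle hv3
          · intro j hj
            have hv : r j₀ < r j := hr hj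
            rw [hj₀r] at hv
            have hv1 : i < (r j).1 := hv
            rw [Fin.lt_def]
            show i - 1 < (r j).1
            omega
        · intro j
          rcases eq_or_ne j j₀ with rfl | hj
          · rw [Function.update_self]
            show a ≤ i - 1 + 1 ∧ i - 1 + 1 ≤ a'
            omega
          · rw [Function.update_of_ne hj]
            exact hra j
        · intro j
          rcases eq_or_ne j j₀ with rfl | hj
          · rw [Function.update_self, hj₀c]
            exact hM1
          · rw [Function.update_of_ne hj, ← hNe _ _ (hnot j hj).1 (hnot j hj).2]
            exact hpos j
  · -- antidiagonal avoids the modified entry (i₂, c₀)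
    push_neg at hused
    refine ⟨r, c, hr, hc, hra, hcb, fun j => ?_⟩
    by_cases hj : r j = i₁ ∧ c j = c₀
    · have hv := hpos j
      rw [hNall, if_pos hj] at hv
      rw [hj.1, hj.2]
      omega
    · rw [← hNe _ _ hj (fun hh => hused j hh.1 hh.2)]
      exact hpos j

end GCS

namespace GCS
variable {m n : ℕ}

/-- Main surgery lemma for `erow`. -/
lemma surgeryE {M N : Matrix (Fin m) (Fin n) ℕ} {i : ℕ} (hi0 : 0 < i) (him : i < m)
    (hfr : erow i M = some N) {a a' b b' d : ℕ}
    (hrows : (a ≤ i ∧ i + 1 ≤ a') ∨ (¬(a ≤ i ∧ i ≤ a') ∧ ¬(a ≤ i + 1 ∧ i + 1 ≤ a')))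
    (hN : HasAnti N a a' b b' d) : HasAnti M a a' b b' d := by
  rw [erow, Option.map_eq_some_iff] at hfr
  obtain ⟨c₀, hlu, hNdef⟩ := hfr
  set i₁ : Fin m := ⟨i - 1, by omega⟩ with hi₁
  set i₂ : Fin m := ⟨i, him⟩ with hi₂
  have e1 : i₁.1 + 1 = i := by show i - 1 + 1 = i; omega
  have e2 : i₁.1 + 1 + 1 = i + 1 := by omega
  have h12 : i₂.1 = i₁.1 + 1 := by show i = i - 1 + 1; omega
  have hlu' : lastUnmatched (i₁.1 + 1 + 1) (i₁.1 + 1) (rowWordLbl M).reverse 0 = some c₀ := by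
    rw [e2, e1]; exact hlu
  have hkey := keyE M i₁ i₂ h12 c₀ hlu'
  have hNall : ∀ (x : Fin m) (y : Fin n), N x y =
      if x = i₂ ∧ y = c₀ then M x y - 1
      else if x = i₁ ∧ y = c₀ then M x y + 1 else M x y := by
    intro x y
    rw [← hNdef]
    have hA : (x.1 + 1 = i + 1 ∧ y = c₀) ↔ (x = i₂ ∧ y = c₀) := by
      constructor
      · rintro ⟨h, rfl⟩
        exact ⟨Fin.ext (show x.1 = i by omega), rfl⟩
      · rintro ⟨rfl, rfl⟩
        exact ⟨rfl, rfl⟩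
    have hB : (x.1 + 1 = i ∧ y = c₀) ↔ (x = i₁ ∧ y = c₀) := by
      constructor
      · rintro ⟨h, rfl⟩
        exact ⟨Fin.ext (show x.1 = i - 1 by omega), rfl⟩
      · rintro ⟨rfl, rfl⟩
        exact ⟨by show i - 1 + 1 = i; omega, rfl⟩
    simp only [Matrix.of_apply, hA, hB]
  have hNe : ∀ (x : Fin m) (y : Fin n), ¬(x = i₁ ∧ y = c₀) → ¬(x = i₂ ∧ y = c₀) →
      N x y = M x y := by
    intro x y h1 h2
    rw [hNall, if_neg h2, if_neg h1]
  obtain ⟨r, c, hr, hc, hra, hcb, hpos⟩ := hN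
  by_cases hused : ∃ j, r j = i₁ ∧ c j = c₀
  · -- the antidiagonal uses the increased entry (i₁, c₀)
    obtain ⟨j₀, hj₀r, hj₀c⟩ := hused
    have hrowsL : a ≤ i ∧ i + 1 ≤ a' := by
      rcases hrows with h | h
      · exact h
      · exfalso
        have hv := hra j₀
        rw [hj₀r] at hv
        have hv' : a ≤ i ∧ i ≤ a' := by
          have : (i₁ : Fin m).1 = i - 1 := rfl
          omega
        exact h.1 hv'
    have hnot : ∀ j, j ≠ j₀ → ¬(r j = i₁ ∧ c j = c₀) ∧ ¬(r j = i₂ ∧ c j = c₀) := by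
      intro j hj
      constructor
      · rintro ⟨-, hcj⟩
        exact hj (hc.injective (hcj.trans hj₀c.symm))
      · rintro ⟨-, hcj⟩
        exact hj (hc.injective (hcj.trans hj₀c.symm))
    by_cases hM1 : 0 < M i₁ c₀
    · refine ⟨r, c, hr, hc, hra, hcb, fun j => ?_⟩
      rcases eq_or_ne j j₀ with rfl | hj
      · rw [hj₀r, hj₀c]; exact hM1
      · rw [← hNe _ _ (hnot j hj).1 (hnot j hj).2]; exact hpos j
    · have hM10 : M i₁ c₀ = 0 := by omega
      by_cases hsucc : ∃ hlt : j₀.1 + 1 < d, r ⟨j₀.1 + 1, hlt⟩ = i₂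
      · -- hard case : successor in row i₂
        obtain ⟨hlt, hsuccEq⟩ := hsucc
        set js : Fin d := ⟨j₀.1 + 1, hlt⟩ with hjs
        have hjslt : j₀ < js := by
          rw [Fin.lt_def]
          show j₀.1 < j₀.1 + 1
          omega
        have hcs : c js < c₀ := by
          have := hc hjslt
          rwa [hj₀c] at this
        have hMs : 1 ≤ M i₂ (c js) := by
          have hne1 : ¬(r js = i₁ ∧ c js = c₀) := by
            rintro ⟨-, hh⟩; exact absurd hh (ne_of_lt hcs)
          have hne2 : ¬(r js = i₂ ∧ c js = c₀) := by
            rintro ⟨-, hh⟩; exact absurd hh (ne_of_lt hcs)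
          have hv := hpos js
          rwa [hNe _ _ hne1 hne2, hsuccEq] at hv
        obtain ⟨c'', hc''1, hc''2, hc''3⟩ := hkey.2 hM10 (c js) hcs hMs
        refine ⟨r, Function.update c j₀ c'', hr, ?_, hra, ?_, ?_⟩
        · apply strictAntiUpdate hc
          · intro j hj
            calc c'' < c₀ := hc''2
            _ = c j₀ := hj₀c.symm
            _ < c j := hc hj
          · intro j hj
            have hjge : js ≤ j := by
              rw [Fin.le_def]
              have := Fin.lt_def.mp hj
              show j₀.1 + 1 ≤ j.1
              omega
            exact lt_of_le_of_lt (hc.antitone hjge) hc''1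
        · intro j
          rcases eq_or_ne j j₀ with rfl | hj
          · rw [Function.update_self]
            have h1 := (hcb js).1
            have h2 := (hcb j).2
            rw [hj₀c] at h2
            have hv1 : (c js).1 < c''.1 := hc''1
            have hv2 : c''.1 < c₀.1 := hc''2
            omega
          · rw [Function.update_of_ne hj]
            exact hcb j
        · intro j
          rcases eq_or_ne j j₀ with rfl | hj
          · rw [Function.update_self, hj₀r]
            exact hc''3
          · rw [Function.update_of_ne hj, ← hNe _ _ (hnot j hj).1 (hnot j hj).2]
            exact hpos j
      · -- no successor in row i₂ : replace (i₁, c₀) by (i₂, c₀)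
        have hM2 : 1 ≤ M i₂ c₀ := hkey.1
        refine ⟨Function.update r j₀ i₂, c, ?_, hc, ?_, hcb, ?_⟩
        · apply strictMonoUpdate hr
          · intro j hj
            have hv : r j < r j₀ := hr hj
            rw [hj₀r] at hv
            have hv1 : (r j).1 < i - 1 := hv
            rw [Fin.lt_def]
            show (r j).1 < i
            omega
          · intro j hj
            have hlt : j₀.1 + 1 < d := by
              have h1 := Fin.lt_def.mp hj
              have h2 := j.isLt
              omega
            have hne : r ⟨j₀.1 + 1, hlt⟩ ≠ i₂ := fun hh => hsucc ⟨hlt, hh⟩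
            have hjge : (⟨j₀.1 + 1, hlt⟩ : Fin d) ≤ j := by
              rw [Fin.le_def]
              have := Fin.lt_def.mp hj
              show j₀.1 + 1 ≤ j.1
              omega
            have hge : r ⟨j₀.1 + 1, hlt⟩ ≤ r j := hr.monotone hjge
            have hv1 : r j₀ < r ⟨j₀.1 + 1, hlt⟩ := hr (by rw [Fin.lt_def]; show j₀.1 < j₀.1 + 1; omega)
            rw [hj₀r] at hv1
            have hv2 : i - 1 < (r ⟨j₀.1 + 1, hlt⟩).1 := hv1
            have hv3 : (r ⟨j₀.1 + 1, hlt⟩).1 ≠ i := fun hh => hne (Fin.ext hh)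
            have hv4 : i₂ < r ⟨j₀.1 + 1, hlt⟩ := by
              rw [Fin.lt_def]
              show i < _
              omega
            exact lt_of_lt_of_le hv4 hge
        · intro j
          rcases eq_or_ne j j₀ with rfl | hj
          · rw [Function.update_self]
            show a ≤ i + 1 ∧ i + 1 ≤ a'
            omega
          · rw [Function.update_of_ne hj]
            exact hra j
        · intro j
          rcases eq_or_ne j j₀ with rfl | hj
          · rw [Function.update_self, hj₀c]
            exact hM2
          · rw [Function.update_of_ne hj, ← hNe _ _ (hnot j hj).1 (hnot j hj).2]
            exact hpos j
  · -- antidiagonal avoids the modified entry (i₁, c₀)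
    push_neg at hused
    refine ⟨r, c, hr, hc, hra, hcb, fun j => ?_⟩
    by_cases hj : r j = i₂ ∧ c j = c₀
    · have hv := hpos j
      rw [hNall, if_pos hj] at hv
      rw [hj.1, hj.2]
      omega
    · rw [← hNe _ _ (fun hh => hused j hh.1 hh.2) hj]
      exact hpos j

end GCS

-- ===== end auxiliary =====


-- ===== section D =====
namespace GCS
variable {m n : ℕ}

lemma isInitExp_unique {σ : Type} (ord : TermOrder σ) (f : MvPolynomial σ ℂ) (u v : σ →₀ ℕ)
    (h1 : IsInitExp ord f u) (h2 : IsInitExp ord f v) : u = v :=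
  ord.le_antisymm u v (h2.2 u h1.1) (h1.2 v h2.1)

lemma expOf_apply (M : Matrix (Fin m) (Fin n) ℕ) (p : Fin m × Fin n) :
    expOf M p = M p.1 p.2 := rfl

lemma antidiagExp_apply {d : ℕ} (r : Fin d → Fin m) (c : Fin d → Fin n) (p : Fin m × Fin n) :
    antidiagExp m n d r c p = ∑ j : Fin d, if (r j, c j.rev) = p then 1 else 0 := by
  rw [antidiagExp, Finsupp.finset_sum_apply]
  congr 1
  ext j
  rw [Finsupp.single_apply]

lemma antidiagExp_le_iff {d : ℕ} (M : Matrix (Fin m) (Fin n) ℕ) (r : Fin d → Fin m)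
    (c : Fin d → Fin n) (hr : StrictMono r) :
    antidiagExp m n d r c ≤ expOf M ↔ ∀ j, 0 < M (r j) (c j.rev) := by
  rw [Finsupp.le_def]
  constructor
  · intro h j
    have hle : (∑ j' : Fin d, if (r j', c j'.rev) = (r j, c j.rev) then 1 else 0)
        ≤ M (r j) (c j.rev) := by
      have hx := h (r j, c j.rev)
      rwa [antidiagExp_apply] at hx
    have h1 : (1 : ℕ) ≤ ∑ j' : Fin d, if (r j', c j'.rev) = (r j, c j.rev) then 1 else 0 := by
      have := Finset.single_le_sum
        (f := fun j' => if (r j', c j'.rev) = (r j, c j.rev) then (1:ℕ) else 0)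
        (fun _ _ => Nat.zero_le _) (Finset.mem_univ j)
      simpa using this
    omega
  · intro h p
    rw [antidiagExp_apply, expOf_apply]
    by_cases hp : ∃ j, (r j, c j.rev) = p
    · obtain ⟨j₀, hj₀⟩ := hp
      have hsum : (∑ j' : Fin d, if (r j', c j'.rev) = p then 1 else 0) = 1 := by
        rw [Finset.sum_eq_single_of_mem j₀ (Finset.mem_univ _), if_pos hj₀]
        intro j' _ hne
        rw [if_neg]
        intro hh
        apply hne
        apply hr.injective
        have := hh.trans hj₀.symm
        exact (Prod.mk.injEq .. ▸ this).1
      rw [hsum, ← hj₀]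
      exact h j₀
    · push_neg at hp
      have hsum : (∑ j' : Fin d, if (r j', c j'.rev) = p then 1 else 0) = 0 := by
        apply Finset.sum_eq_zero
        intro j' _
        rw [if_neg (hp j')]
      rw [hsum]
      exact Nat.zero_le _

lemma hasAnti_iff_exists (M : Matrix (Fin m) (Fin n) ℕ) (a a' b b' d : ℕ) :
    HasAnti M a a' b b' d ↔ ∃ (r : Fin d → Fin m) (c : Fin d → Fin n),
      StrictMono r ∧ StrictMono c ∧
      (∀ j, a ≤ (r j).1 + 1 ∧ (r j).1 + 1 ≤ a') ∧
      (∀ j, b ≤ (c j).1 + 1 ∧ (c j).1 + 1 ≤ b') ∧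
      ∀ j, 0 < M (r j) (c j.rev) := by
  constructor
  · rintro ⟨r, c, hr, hc, hra, hcb, hpos⟩
    refine ⟨r, fun j => c (Fin.rev j), hr, ?_, hra, fun j => hcb _, fun j => ?_⟩
    · intro p q hpq
      exact hc (Fin.rev_lt_rev.mpr hpq)
    · simpa [Fin.rev_rev] using hpos j
  · rintro ⟨r, c, hr, hc, hra, hcb, hpos⟩
    refine ⟨r, fun j => c (Fin.rev j), hr, ?_, hra, fun j => hcb _, fun j => hpos j⟩
    intro p q hpq
    exact hc (Fin.rev_lt_rev.mpr hpq)

theorem matLT_eq (m n k : ℕ) (a a' b b' d : Fin k → ℕ) (hd : ∀ i, 0 < d i)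
    (G : Set (MvPolynomial (Fin m × Fin n) ℂ))
    (hG : G = ⋃ i, minorsOfSub m n (a i) (a' i) (b i) (b' i) (d i))
    (ord : TermOrder (Fin m × Fin n)) (hord : IsAntidiagonalOrder m n ord)
    (hGB : IsGroebnerBasis ord (Ideal.span G) G) :
    matLT ord (Ideal.span G)
      = {M | ∃ t : Fin k, HasAnti M (a t) (a' t) (b t) (b' t) (d t)} := by
  have hset : {p | ∃ g ∈ G, ∃ u, IsInitExp ord g u ∧ p = MvPolynomial.monomial u (1:ℂ)}
      = (fun u => MvPolynomial.monomial u (1:ℂ)) ''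
        {u | ∃ (t : Fin k) (r : Fin (d t) → Fin m) (c : Fin (d t) → Fin n),
          StrictMono r ∧ StrictMono c ∧
          (∀ i, a t ≤ (r i).1 + 1 ∧ (r i).1 + 1 ≤ a' t) ∧
          (∀ j, b t ≤ (c j).1 + 1 ∧ (c j).1 + 1 ≤ b' t) ∧
          u = antidiagExp m n (d t) r c} := by
    ext p
    constructor
    · rintro ⟨g, hgG, u, hu, rfl⟩
      rw [hG, Set.mem_iUnion] at hgG
      obtain ⟨t, hgt⟩ := hgG
      obtain ⟨r, c, hrm, hcm, hrb, hcb, rfl⟩ := hgt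
      have hinit := hord (d t) (hd t) r c hrm hcm
      have huniq := isInitExp_unique ord _ _ _ hu hinit
      subst huniq
      exact ⟨_, ⟨t, r, c, hrm, hcm, hrb, hcb, rfl⟩, rfl⟩
    · rintro ⟨u, ⟨t, r, c, hrm, hcm, hrb, hcb, rfl⟩, rfl⟩
      refine ⟨genMinor m n (d t) r c, ?_, _, hord (d t) (hd t) r c hrm hcm, rfl⟩
      rw [hG]
      exact Set.mem_iUnion.mpr ⟨t, ⟨r, c, hrm, hcm, hrb, hcb, rfl⟩⟩
  ext M
  simp only [matLT, Set.mem_setOf_eq]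
  rw [hGB.2, hset, MvPolynomial.mem_ideal_span_monomial_image]
  simp only [MvPolynomial.support_monomial, one_ne_zero, if_false, Finset.mem_singleton,
    forall_eq, Set.mem_setOf_eq]
  constructor
  · rintro ⟨si, ⟨t, r, c, hrm, hcm, hrb, hcb, rfl⟩, hle⟩
    refine ⟨t, (hasAnti_iff_exists M _ _ _ _ _).mpr ⟨r, c, hrm, hcm, hrb, hcb, ?_⟩⟩
    exact (antidiagExp_le_iff M r c hrm).mp hle
  · rintro ⟨t, hanti⟩
    obtain ⟨r, c, hrm, hcm, hrb, hcb, hpos⟩ := (hasAnti_iff_exists M _ _ _ _ _).mp hanti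
    exact ⟨antidiagExp m n (d t) r c, ⟨t, r, c, hrm, hcm, hrb, hcb, rfl⟩,
      (antidiagExp_le_iff M r c hrm).mpr hpos⟩

end GCS



-- ===== section E =====
namespace GCS
variable {m n : ℕ}

open MvPolynomial

lemma det_row_expansion {D q : ℕ} {R : Type} [CommRing R] (coef : Fin D → Fin q → R)
    (V : Fin q → (Fin D → R)) :
    Matrix.det (Matrix.of fun i j => ∑ u : Fin q, coef i u * V u j)
      = ∑ f : Fin D → Fin q, (∏ i, coef i (f i))
          * Matrix.det (Matrix.of fun i j => V (f i) j) := by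
  have h1 : (Matrix.of fun i j => ∑ u : Fin q, coef i u * V u j)
      = fun i => ∑ u : Fin q, coef i u • V u := by
    funext i j
    simp [Finset.sum_apply]
  rw [h1]
  have h2 : Matrix.det (fun i => ∑ u : Fin q, coef i u • V u : Matrix (Fin D) (Fin D) R)
      = (Matrix.detRowAlternating (R := R) (n := Fin D)).toMultilinearMap
          (fun i => ∑ u : Fin q, coef i u • V u) := rfl
  rw [h2, MultilinearMap.map_sum]
  apply Finset.sum_congr rfl
  intro f _
  rw [MultilinearMap.map_smul_univ, smul_eq_mul]
  rfl

lemma notSameBlock {I : Finset ℕ} {aa aa' : ℕ} {x y : ℕ}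
    (hI1 : aa - 1 ∈ I) (hI2 : aa' ∈ I) (hx : aa ≤ x + 1 ∧ x + 1 ≤ aa') (ha : 1 ≤ aa)
    (hy : ¬(aa ≤ y + 1 ∧ y + 1 ≤ aa')) : ¬ SameBlock I x y := by
  intro hsb
  rcases Nat.lt_or_ge (y + 1) aa with hlt | hge
  · have := hsb (aa - 1) hI1
    omega
  · have := hsb aa' hI2
    omega

lemma sign_cast_mul_self {R : Type} [CommRing R] (u : ℤˣ) :
    ((u : ℤ) : R) * ((u : ℤ) : R) = 1 := by
  rcases Int.units_eq_one_or u with h | h <;> simp [h]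

lemma det_X_mem_span {k : ℕ} (a a' b b' d : Fin k → ℕ)
    (G : Set (MvPolynomial (Fin m × Fin n) ℂ))
    (hG : G = ⋃ i, minorsOfSub m n (a i) (a' i) (b i) (b' i) (d i))
    (t : Fin k) (f : Fin (d t) → Fin m) (t' : Fin (d t) → Fin n)
    (hfi : Function.Injective f) (hti : Function.Injective t')
    (hfr : ∀ i, a t ≤ (f i).1 + 1 ∧ (f i).1 + 1 ≤ a' t)
    (htr : ∀ j, b t ≤ (t' j).1 + 1 ∧ (t' j).1 + 1 ≤ b' t) :
    Matrix.det (Matrix.of fun i j : Fin (d t) => (MvPolynomial.X ((f i), (t' j))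
      : MvPolynomial (Fin m × Fin n) ℂ)) ∈ Ideal.span G := by
  have hfσ : StrictMono (f ∘ Tuple.sort f) :=
    (Tuple.monotone_sort f).strictMono_of_injective (hfi.comp (Tuple.sort f).injective)
  have htτ : StrictMono (t' ∘ Tuple.sort t') :=
    (Tuple.monotone_sort t').strictMono_of_injective (hti.comp (Tuple.sort t').injective)
  have hgen : genMinor m n (d t) (f ∘ Tuple.sort f) (t' ∘ Tuple.sort t') ∈ G := by
    rw [hG]
    exact Set.mem_iUnion.mpr ⟨t, ⟨f ∘ Tuple.sort f, t' ∘ Tuple.sort t', hfσ, htτ,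
      fun i => hfr (Tuple.sort f i), fun j => htr (Tuple.sort t' j), rfl⟩⟩
  set P : Matrix (Fin (d t)) (Fin (d t)) (MvPolynomial (Fin m × Fin n) ℂ) :=
    Matrix.of fun i j => MvPolynomial.X ((f i), (t' j)) with hP
  have hsub : genMinor m n (d t) (f ∘ Tuple.sort f) (t' ∘ Tuple.sort t')
      = ((P.submatrix (Tuple.sort f) id).submatrix id (Tuple.sort t')).det := rfl
  have hdet : genMinor m n (d t) (f ∘ Tuple.sort f) (t' ∘ Tuple.sort t')
      = ((Equiv.Perm.sign (Tuple.sort t') : ℤ) : MvPolynomial (Fin m × Fin n) ℂ)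
        * (((Equiv.Perm.sign (Tuple.sort f) : ℤ) : MvPolynomial (Fin m × Fin n) ℂ)
          * P.det) := by
    rw [hsub, Matrix.det_permute', Matrix.det_permute]
  have h1 := sign_cast_mul_self (R := MvPolynomial (Fin m × Fin n) ℂ)
    (Equiv.Perm.sign (Tuple.sort t'))
  have h2 := sign_cast_mul_self (R := MvPolynomial (Fin m × Fin n) ℂ)
    (Equiv.Perm.sign (Tuple.sort f))
  have h4 : P.det = ((Equiv.Perm.sign (Tuple.sort t') : ℤ) : MvPolynomial (Fin m × Fin n) ℂ)
      * (((Equiv.Perm.sign (Tuple.sort f) : ℤ) : MvPolynomial (Fin m × Fin n) ℂ)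
        * genMinor m n (d t) (f ∘ Tuple.sort f) (t' ∘ Tuple.sort t')) := by
    rw [hdet]
    calc P.det = (((Equiv.Perm.sign (Tuple.sort t') : ℤ) : MvPolynomial (Fin m × Fin n) ℂ)
        * ((Equiv.Perm.sign (Tuple.sort t') : ℤ) : MvPolynomial (Fin m × Fin n) ℂ))
        * ((((Equiv.Perm.sign (Tuple.sort f) : ℤ) : MvPolynomial (Fin m × Fin n) ℂ)
        * ((Equiv.Perm.sign (Tuple.sort f) : ℤ) : MvPolynomial (Fin m × Fin n) ℂ)) * P.det) := by
          rw [h1, h2, one_mul, one_mul]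
    _ = _ := by ring
  rw [h4]
  exact Ideal.mul_mem_left _ _ (Ideal.mul_mem_left _ _ (Ideal.subset_span hgen))

lemma leviAct_mem_span {k : ℕ} (a a' b b' d : Fin k → ℕ)
    (hbnd : ∀ i, 1 ≤ a i ∧ a i ≤ a' i ∧ a' i ≤ m ∧ 1 ≤ b i ∧ b i ≤ b' i ∧ b' i ≤ n)
    (G : Set (MvPolynomial (Fin m × Fin n) ℂ))
    (hG : G = ⋃ i, minorsOfSub m n (a i) (a' i) (b i) (b' i) (d i))
    (I J : Finset ℕ) (hIa : ∀ i, a i - 1 ∈ I ∧ a' i ∈ I) (hJb : ∀ i, b i - 1 ∈ J ∧ b' i ∈ J)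
    (g : Matrix (Fin m) (Fin m) ℂ) (h : Matrix (Fin n) (Fin n) ℂ)
    (hgI : InLevi I g) (hhJ : InLevi J h)
    {p : MvPolynomial (Fin m × Fin n) ℂ} (hp : p ∈ G) :
    leviAct g h p ∈ Ideal.span G := by
  rw [hG, Set.mem_iUnion] at hp
  obtain ⟨t, r, c, hrm, hcm, hrb, hcb, rfl⟩ := hp
  -- expand the image of the minor
  have h1 : leviAct g h (genMinor m n (d t) r c)
      = (Matrix.of fun i j : Fin (d t) => ∑ u : Fin m, MvPolynomial.C (g (r i) u) *
          ∑ v : Fin n, MvPolynomial.C (h (c j) v) * MvPolynomial.X (u, v)).det := by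
    rw [genMinor, AlgHom.map_det]
    congr 1
    refine Matrix.ext fun i j => ?_
    rw [AlgHom.mapMatrix_apply, Matrix.map_apply, Matrix.of_apply, Matrix.of_apply,
      leviAct, MvPolynomial.aeval_X]
    simp [Finset.mul_sum, mul_assoc]
  rw [h1, det_row_expansion (fun i u => MvPolynomial.C (g (r i) u))
    (fun u => fun j => ∑ v : Fin n, MvPolynomial.C (h (c j) v) * MvPolynomial.X (u, v))]
  apply Ideal.sum_mem
  intro f _
  by_cases hfr : ∀ i, a t ≤ (f i).1 + 1 ∧ (f i).1 + 1 ≤ a' t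
  · apply Ideal.mul_mem_left
    have hcols : (Matrix.of fun i j : Fin (d t) =>
        ∑ v : Fin n, MvPolynomial.C (h (c j) v) * MvPolynomial.X (f i, v)).det
        = (Matrix.of fun j i : Fin (d t) =>
            ∑ v : Fin n, MvPolynomial.C (h (c j) v) * MvPolynomial.X (f i, v)).det := by
      rw [← Matrix.det_transpose]
      congr 1
    rw [hcols, det_row_expansion (fun j v => MvPolynomial.C (h (c j) v))
      (fun v => fun i => MvPolynomial.X (f i, v))]
    apply Ideal.sum_mem
    intro t' _
    by_cases htr : ∀ j, b t ≤ (t' j).1 + 1 ∧ (t' j).1 + 1 ≤ b' t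
    · apply Ideal.mul_mem_left
      by_cases hfi : Function.Injective f
      · by_cases hti : Function.Injective t'
        · have hXdet : (Matrix.of fun j i : Fin (d t) =>
              (MvPolynomial.X (f i, t' j) : MvPolynomial (Fin m × Fin n) ℂ)).det
              = (Matrix.of fun i j : Fin (d t) =>
                  (MvPolynomial.X (f i, t' j) : MvPolynomial (Fin m × Fin n) ℂ)).det := by
            rw [← Matrix.det_transpose]
            congr 1
          rw [hXdet]
          exact det_X_mem_span a a' b b' d G hG t f t' hfi hti hfr htr
        · obtain ⟨j1, j2, hj12, hne⟩ := Function.not_injective_iff.mp hti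
          rw [Matrix.det_zero_of_row_eq hne (by funext i; simp [hj12])]
          exact Ideal.zero_mem _
      · obtain ⟨i1, i2, hi12, hne⟩ := Function.not_injective_iff.mp hfi
        rw [Matrix.det_zero_of_column_eq hne (by intro kk; simp [hi12])]
        exact Ideal.zero_mem _
    · push_neg at htr
      obtain ⟨j₀, hj₀⟩ := htr
      have hz : h (c j₀) (t' j₀) = 0 := by
        apply hhJ.2
        exact notSameBlock (hJb t).1 (hJb t).2 (hcb j₀) (hbnd t).2.2.2.1
          (by intro hcontra; have := hj₀ hcontra.1; omega)
      rw [show (∏ j, MvPolynomial.C (h (c j) (t' j))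
          : MvPolynomial (Fin m × Fin n) ℂ) = 0 from
        Finset.prod_eq_zero (Finset.mem_univ j₀) (by rw [hz, map_zero]), zero_mul]
      exact Ideal.zero_mem _
  · push_neg at hfr
    obtain ⟨i₀, hi₀⟩ := hfr
    have hz : g (r i₀) (f i₀) = 0 := by
      apply hgI.2
      exact notSameBlock (hIa t).1 (hIa t).2 (hrb i₀) (hbnd t).1
        (by intro hcontra; have := hi₀ hcontra.1; omega)
    rw [show (∏ i, MvPolynomial.C (g (r i) (f i))
        : MvPolynomial (Fin m × Fin n) ℂ) = 0 from
      Finset.prod_eq_zero (Finset.mem_univ i₀) (by rw [hz, map_zero]), zero_mul]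
    exact Ideal.zero_mem _

end GCS



namespace GCS

lemma leviRows {I : Finset ℕ} {i aa aa' : ℕ} (hiI : i ∉ I) (h1 : aa - 1 ∈ I) (h2 : aa' ∈ I)
    (ha : 1 ≤ aa) :
    (aa ≤ i ∧ i + 1 ≤ aa') ∨ (¬(aa ≤ i ∧ i ≤ aa') ∧ ¬(aa ≤ i + 1 ∧ i + 1 ≤ aa')) := by
  rcases Nat.lt_or_ge i aa with hlt | hge
  · right
    have hne : i ≠ aa - 1 := fun hh => hiI (hh ▸ h1)
    omega
  · rcases Nat.lt_or_ge aa' i with hgt | hle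
    · right
      omega
    · left
      have hne : i ≠ aa' := fun hh => hiI (hh ▸ h2)
      omega

end GCS

open GCS in
/-- Theorem `generalizeddetideals`: a Gröbner-determinantal ideal
(a contiguous determinantal ideal whose defining minors form a Gröbner basis under an
antidiagonal term order) which is `L_𝐈 × L_𝐉`-stable (the bounds of the submatrices being
compatible with the Levi datum) is `(𝐈,𝐉,≺)`-bicrystalline. -/
theorem groebnerDeterminantal_bicrystalline
    (m n k : ℕ) (a a' b b' d : Fin k → ℕ) (hd : ∀ i, 0 < d i)
    (hbnd : ∀ i, 1 ≤ a i ∧ a i ≤ a' i ∧ a' i ≤ m ∧ 1 ≤ b i ∧ b i ≤ b' i ∧ b' i ≤ n)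
    (G : Set (MvPolynomial (Fin m × Fin n) ℂ))
    (hG : G = ⋃ i, minorsOfSub m n (a i) (a' i) (b i) (b' i) (d i))
    (ord : TermOrder (Fin m × Fin n)) (hord : IsAntidiagonalOrder m n ord)
    (hGB : IsGroebnerBasis ord (Ideal.span G) G)
    (I J : Finset ℕ) (hI : IsLeviDatum m I) (hJ : IsLeviDatum n J)
    (hIa : ∀ i, a i - 1 ∈ I ∧ a' i ∈ I) (hJb : ∀ i, b i - 1 ∈ J ∧ b' i ∈ J) :
    IsBicrystalline m n I J ord (Ideal.span G) := by
  constructor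
  · -- Levi stability
    intro g h hgI hhJ f hf
    induction hf using Submodule.span_induction with
    | mem x hx => exact leviAct_mem_span a a' b b' d hbnd G hG I J hIa hJb g h hgI hhJ hx
    | zero => rw [map_zero]; exact Ideal.zero_mem _
    | add x y _ _ ihx ihy => rw [map_add]; exact Ideal.add_mem _ ihx ihy
    | smul r x _ ih =>
      rw [smul_eq_mul, map_mul]
      exact Ideal.mul_mem_left _ _ ih
  · -- bicrystal closedness of the standard monomials
    have hMT := matLT_eq m n k a a' b b' d hd G hG ord hord hGB
    intro φ hφ M hM N hφM
    simp only [Set.mem_setOf_eq, hMT, Set.mem_setOf_eq] at hM ⊢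
    rintro ⟨t, hanti⟩
    apply hM
    rcases hφ with ⟨i, hi0, him, hiI, hfe⟩ | ⟨j, hj0, hjn, hjJ, hfe⟩
    · have hrows := leviRows hiI (hIa t).1 (hIa t).2 (hbnd t).1
      rcases hfe with rfl | rfl
      · exact ⟨t, surgeryF hi0 him hφM hrows hanti⟩
      · exact ⟨t, surgeryE hi0 him hφM hrows hanti⟩
    · have hcols := leviRows hjJ (hJb t).1 (hJb t).2 (hbnd t).2.2.2.1
      rcases hfe with rfl | rfl
      · have hT : frow j M.transpose = some N.transpose := by
          rw [fcol] at hφM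
          obtain ⟨N', hN', rfl⟩ := Option.map_eq_some_iff.mp hφM
          rw [hN']
          simp
        exact ⟨t, hasAnti_transpose_iff.mp
          (surgeryF hj0 hjn hT hcols (hasAnti_transpose_of hanti))⟩
      · have hT : erow j M.transpose = some N.transpose := by
          rw [ecol] at hφM
          obtain ⟨N', hN', rfl⟩ := Option.map_eq_some_iff.mp hφM
          rw [hN']
          simp
        exact ⟨t, hasAnti_transpose_iff.mp
          (surgeryE hj0 hjn hT hcols (hasAnti_transpose_of hanti))⟩
end

section
/- Let v ∈ S_n and let ≺ be the lexicographic term order on ℂ[z_{ij} : 1 ≤ i,j ≤ n] determined by the variable order z_{1n} ≻ z_{1,n−1} ≻ … ≻ z_{11} ≻ z_{2n} ≻ … ≻ z_{n1}. Then for every 1 ≤ k ≤ n, the lead term of the k-th basic minor satisfies init_≺(Δ_v^{(k)}) = ∏_{(i,j) ∈ D_v(k)} z_{ij}. -/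
namespace BMAux
open Finset GCS

variable {n : ℕ}

/-- Variable position of `Z_v`. -/
def Vr (v : Equiv.Perm (Fin n)) (i j : Fin n) : Prop := j < v i ∧ i < v.symm j

instance (v : Equiv.Perm (Fin n)) (i j : Fin n) : Decidable (Vr v i j) := by
  unfold Vr; infer_instance

/-- Number of columns `d ≤ j` whose one sits strictly below row `i`. -/
def qq (v : Equiv.Perm (Fin n)) (i j : Fin n) : ℕ :=
  ((Iic j).filter fun d => i < v.symm d).card

lemma rank_eq (v : Equiv.Perm (Fin n)) (i j : Fin n) :
    rankP n v i j = ((Iic j).filter fun d => v.symm d ≤ i).card := by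
  unfold rankP
  apply Finset.card_bij (fun x _ => v x)
  · intro x hx
    simp only [mem_filter, mem_univ, true_and] at hx
    simp only [mem_filter, mem_Iic]
    exact ⟨hx.2, by simpa using hx.1⟩
  · intro x hx y hy h; exact v.injective h
  · intro d hd
    simp only [mem_filter, mem_Iic] at hd
    refine ⟨v.symm d, ?_, by simp⟩
    simp only [mem_filter, mem_univ, true_and]
    exact ⟨hd.2, by simpa using hd.1⟩

lemma rank_eq' (v : Equiv.Perm (Fin n)) (i j : Fin n) :
    rankP n v i j = ((Iic i).filter fun x => v x ≤ j).card := by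
  unfold rankP
  congr 1
  ext x
  simp [mem_Iic]

lemma rank_add_qq (v : Equiv.Perm (Fin n)) (i j : Fin n) :
    rankP n v i j + qq v i j = j.1 + 1 := by
  have h := Finset.card_filter_add_card_filter_not (s := Iic j)
    (p := fun d => v.symm d ≤ i)
  rw [Fin.card_Iic] at h
  rw [rank_eq]
  unfold qq
  have : ((Iic j).filter fun d => i < v.symm d) = ((Iic j).filter fun d => ¬ v.symm d ≤ i) := by
    apply filter_congr; intro d _; simp [not_le]
  rw [this]
  exact h

lemma drift_eq (v : Equiv.Perm (Fin n)) (i j : Fin n) :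
    driftP n v i j = i.1 + qq v i j := by
  have h := rank_add_qq v i j
  unfold driftP
  omega

lemma rank_symm (v : Equiv.Perm (Fin n)) (i j : Fin n) :
    rankP n v.symm j i = rankP n v i j := by
  rw [rank_eq v.symm j i, rank_eq' v i j]
  simp

lemma drift_symm (v : Equiv.Perm (Fin n)) (i j : Fin n) :
    driftP n v.symm j i = driftP n v i j := by
  unfold driftP
  rw [rank_symm]
  omega

lemma Vr_symm (v : Equiv.Perm (Fin n)) (i j : Fin n) : Vr v.symm j i ↔ Vr v i j := by
  unfold Vr
  rw [Equiv.symm_symm]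
  exact and_comm

lemma qq_mono (v : Equiv.Perm (Fin n)) (i : Fin n) {j j' : Fin n} (h : j ≤ j') :
    qq v i j ≤ qq v i j' :=
  card_le_card (filter_subset_filter _ (Iic_subset_Iic.mpr h))

lemma qq_lt (v : Equiv.Perm (Fin n)) {i j j' : Fin n} (h2 : i < v.symm j') (h : j < j') :
    qq v i j < qq v i j' := by
  apply Finset.card_lt_card
  rw [Finset.ssubset_def]
  constructor
  · exact filter_subset_filter _ (Iic_subset_Iic.mpr h.le)
  · intro hsub
    have hj' : j' ∈ (Iic j).filter fun d => i < v.symm d :=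
      hsub (by simp [mem_filter, mem_Iic, h2])
    simp only [mem_filter, mem_Iic] at hj'
    exact absurd hj'.1 (not_le.mpr h)

lemma qq_pos (v : Equiv.Perm (Fin n)) {i j : Fin n} (h : i < v.symm j) : 0 < qq v i j :=
  card_pos.mpr ⟨j, by simp [mem_filter, mem_Iic, h]⟩

lemma qq_step (v : Equiv.Perm (Fin n)) (i j0 : Fin n) (m : ℕ) (hm : 1 ≤ m)
    (hvar : Vr v i j0) (hlt : m < qq v i j0) :
    ∃ j2, j2 < j0 ∧ Vr v i j2 ∧ m ≤ qq v i j2 := by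
  classical
  set T := (Iio j0).filter (fun d => i < v.symm d) with hT
  have hsplit : qq v i j0 = T.card + 1 := by
    unfold qq
    rw [← Finset.Iio_insert, Finset.filter_insert, if_pos hvar.2,
      Finset.card_insert_of_notMem]
    intro hmem
    have := (mem_filter.mp hmem).1
    simp at this
  have hTne : T.Nonempty := card_pos.mp (by omega)
  set j2 := T.max' hTne with hj2
  have hj2T : j2 ∈ T := T.max'_mem hTne
  have hj2T' := hj2T
  simp only [hT, mem_filter, mem_Iio] at hj2T'
  have hvar2 : Vr v i j2 := ⟨lt_trans hj2T'.1 hvar.1, hj2T'.2⟩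
  have hsub : T ⊆ (Iic j2).filter fun d => i < v.symm d := by
    intro d hd
    have hd' := hd
    simp only [hT, mem_filter, mem_Iio] at hd'
    simp only [mem_filter, mem_Iic]
    exact ⟨T.le_max' d hd, hd'.2⟩
  have hcard : T.card ≤ qq v i j2 := card_le_card hsub
  exact ⟨j2, hj2T'.1, hvar2, by omega⟩

lemma exists_qq_eq (v : Equiv.Perm (Fin n)) (i : Fin n) (m : ℕ) (hm : 1 ≤ m) (j1 : Fin n)
    (hvar : Vr v i j1) (hge : m ≤ qq v i j1) : ∃ j, Vr v i j ∧ qq v i j = m := by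
  classical
  set S := (univ : Finset (Fin n)).filter (fun j => Vr v i j ∧ m ≤ qq v i j) with hS
  have hne : S.Nonempty := ⟨j1, by simp [hS, hvar, hge]⟩
  set j0 := S.min' hne with hj0d
  have hj0 : j0 ∈ S := S.min'_mem hne
  simp only [hS, mem_filter, mem_univ, true_and] at hj0
  refine ⟨j0, hj0.1, ?_⟩
  by_contra hne2
  have hlt : m < qq v i j0 := lt_of_le_of_ne hj0.2 (Ne.symm hne2)
  obtain ⟨j2, hj2lt, hv2, hge2⟩ := qq_step v i j0 m hm hj0.1 hlt
  have : j0 ≤ j2 := S.min'_le j2 (by simp [hS, hv2, hge2])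
  exact absurd hj2lt (not_lt.mpr this)

/-- Membership in the `k`-th drifted antidiagonal. -/
def Dp (v : Equiv.Perm (Fin n)) (k : ℕ) (i j : Fin n) : Prop :=
  Vr v i j ∧ driftP n v i j = k

instance (v : Equiv.Perm (Fin n)) (k : ℕ) (i j : Fin n) : Decidable (Dp v k i j) := by
  unfold Dp; infer_instance

lemma Dp_symm (v : Equiv.Perm (Fin n)) (k : ℕ) (i j : Fin n) :
    Dp v.symm k j i ↔ Dp v k i j := by
  unfold Dp
  rw [Vr_symm, drift_symm]

lemma Dp_row_lt {v : Equiv.Perm (Fin n)} {k : ℕ} {i j : Fin n} (h : Dp v k i j) : i.1 < k := by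
  have h1 := drift_eq v i j
  have h2 := qq_pos v h.1.2
  have h3 := h.2
  omega

lemma Dp_col_lt {v : Equiv.Perm (Fin n)} {k : ℕ} {i j : Fin n} (h : Dp v k i j) : j.1 < k :=
  Dp_row_lt ((Dp_symm v k i j).mpr h)

lemma Dp_unique {v : Equiv.Perm (Fin n)} {k : ℕ} {i j j' : Fin n} (h : Dp v k i j)
    (h' : Dp v k i j') : j = j' := by
  rcases lt_trichotomy j j' with hlt | he | hgt
  · exfalso
    have := qq_lt v h'.1.2 hlt
    have e1 := drift_eq v i j
    have e2 := drift_eq v i j'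
    have := h.2; have := h'.2
    omega
  · exact he
  · exfalso
    have := qq_lt v h.1.2 hgt
    have e1 := drift_eq v i j
    have e2 := drift_eq v i j'
    have := h.2; have := h'.2
    omega

lemma Dp_unique_row {v : Equiv.Perm (Fin n)} {k : ℕ} {i i' j : Fin n} (h : Dp v k i j)
    (h' : Dp v k i' j) : i = i' :=
  Dp_unique ((Dp_symm v k i j).mpr h) ((Dp_symm v k i' j).mpr h')

lemma card_val_lt {k : ℕ} (hk : k ≤ n) :
    ((univ : Finset (Fin n)).filter fun d => d.1 < k).card = k := by
  have : ((univ : Finset (Fin n)).filter fun d => d.1 < k).card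
      = (univ : Finset (Fin k)).card := by
    apply Finset.card_bij (fun (d : Fin n) hd => (⟨d.1, by
      simpa using (mem_filter.mp hd).2⟩ : Fin k))
    · intro a ha; exact mem_univ _
    · intro a ha b hb hab
      simp only [Fin.mk.injEq] at hab
      exact Fin.ext hab
    · intro b _
      refine ⟨Fin.castLE hk b, ?_, rfl⟩
      simpa [mem_filter] using b.isLt
  rw [this, card_univ, Fintype.card_fin]

lemma exists_Dp {k : ℕ} (v : Equiv.Perm (Fin n)) (hk : k ≤ n) (i : Fin n) (hi : i.1 < k)
    (hv : k ≤ (v i).1) : ∃ j, Dp v k i j := by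
  classical
  set B := (univ : Finset (Fin n)).filter (fun d => d.1 < k ∧ v.symm d ≤ i) with hB
  have hBcard : B.card ≤ i.1 := by
    have h1 : B.card ≤ (Iio i).card := by
      apply card_le_card_of_injOn (fun d => v.symm d)
      · intro d hd
        simp only [hB, mem_coe, mem_filter, mem_univ, true_and] at hd
        simp only [mem_coe, mem_Iio]
        rcases lt_or_eq_of_le hd.2 with h | h
        · exact h
        · exfalso
          have : d = v i := by
            have := congrArg v h
            simpa using this
          rw [this] at hd
          omega
      · intro x _ y _ hxy
        exact v.symm.injective hxy
    simpa [Fin.card_Iio] using h1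
  set W := (univ : Finset (Fin n)).filter (fun d => d.1 < k ∧ i < v.symm d) with hW
  have hWB : W.card + B.card = k := by
    have h1 := Finset.card_filter_add_card_filter_not
      (s := (univ : Finset (Fin n)).filter fun d => d.1 < k) (p := fun d => i < v.symm d)
    rw [filter_filter, filter_filter, card_val_lt hk] at h1
    have e2 : ((univ : Finset (Fin n)).filter fun d => d.1 < k ∧ ¬ i < v.symm d) = B := by
      apply filter_congr; intro d _; simp [hB, not_lt]
    rw [e2] at h1
    have e1 : ((univ : Finset (Fin n)).filter fun d => d.1 < k ∧ i < v.symm d) = W := rfl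
    rw [e1] at h1
    exact h1
  have hWne : W.Nonempty := card_pos.mp (by omega)
  set j1 := W.max' hWne with hj1d
  have hj1 : j1 ∈ W := W.max'_mem hWne
  simp only [hW, mem_filter, mem_univ, true_and] at hj1
  have hvar : Vr v i j1 := ⟨Fin.lt_def.mpr (lt_of_lt_of_le hj1.1 hv), hj1.2⟩
  have hle : k - i.1 ≤ qq v i j1 := by
    have hsub : W ⊆ (Iic j1).filter fun d => i < v.symm d := by
      intro d hd
      have hd' := hd
      simp only [hW, mem_filter, mem_univ, true_and] at hd'
      simp only [mem_filter, mem_Iic]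
      exact ⟨W.le_max' d hd, hd'.2⟩
    have := card_le_card hsub
    unfold qq
    omega
  obtain ⟨j, hj, hq⟩ := exists_qq_eq v i (k - i.1) (by omega) j1 hvar hle
  exact ⟨j, hj, by rw [drift_eq]; omega⟩

lemma not_Dp_col {k : ℕ} (v : Equiv.Perm (Fin n)) (i : Fin n) (hi : i.1 < k)
    (hrow : ∀ j, ¬ Dp v k i j) : ∀ b, ¬ Dp v k b (v i) := by
  classical
  intro b hb
  have hbi : b < i := by
    have := hb.1.2
    simpa using this
  have hkb : b.1 + qq v b (v i) = k := by rw [← drift_eq]; exact hb.2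
  have hsplit := Finset.card_filter_add_card_filter_not
    (s := (Iic (v i)).filter fun d => b < v.symm d) (p := fun d => v.symm d ≤ i)
  have hpart1 : (((Iic (v i)).filter fun d => b < v.symm d).filter
      fun d => v.symm d ≤ i).card ≤ i.1 - b.1 := by
    have h1 : (((Iic (v i)).filter fun d => b < v.symm d).filter
        fun d => v.symm d ≤ i).card ≤ (Ioc b i).card := by
      apply card_le_card_of_injOn (fun d => v.symm d)
      · intro d hd
        simp only [mem_coe, mem_filter, mem_Iic] at hd
        simp only [mem_coe, mem_Ioc]
        exact ⟨hd.1.2, hd.2⟩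
      · intro x _ y _ hxy
        exact v.symm.injective hxy
    simpa [Fin.card_Ioc] using h1
  have hpart2 : (((Iic (v i)).filter fun d => b < v.symm d).filter fun d => ¬ v.symm d ≤ i)
      = (Iic (v i)).filter fun d => i < v.symm d := by
    rw [filter_filter]
    apply filter_congr
    intro d _
    simp only [not_le]
    constructor
    · intro h; exact h.2
    · intro h; exact ⟨lt_trans hbi h, h⟩
  rw [hpart2] at hsplit
  have hqb : (((Iic (v i))).filter fun d => b < v.symm d).card = qq v b (v i) := rfl
  rw [hqb] at hsplit
  have hqvi : k - i.1 ≤ ((Iic (v i)).filter fun d => i < v.symm d).card := by omega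
  have hne : ((Iic (v i)).filter fun d => i < v.symm d).Nonempty := by
    apply card_pos.mp
    omega
  set j1 := ((Iic (v i)).filter fun d => i < v.symm d).max' hne with hj1d
  have hj1 : j1 ∈ (Iic (v i)).filter fun d => i < v.symm d :=
    Finset.max'_mem _ hne
  have hj1' := hj1
  simp only [mem_filter, mem_Iic] at hj1'
  have hj1ne : j1 ≠ v i := by
    intro h
    have := hj1'.2
    rw [h] at this
    simp at this
  have hvar : Vr v i j1 := ⟨lt_of_le_of_ne hj1'.1 hj1ne, hj1'.2⟩
  have hle : k - i.1 ≤ qq v i j1 := by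
    have hsub : ((Iic (v i)).filter fun d => i < v.symm d)
        ⊆ (Iic j1).filter fun d => i < v.symm d := by
      intro d hd
      have hd' := hd
      simp only [mem_filter, mem_Iic] at hd'
      simp only [mem_filter, mem_Iic]
      exact ⟨Finset.le_max' _ d hd, hd'.2⟩
    have := card_le_card hsub
    unfold qq
    omega
  obtain ⟨j, hj, hq⟩ := exists_qq_eq v i (k - i.1) (by omega) j1 hvar hle
  exact hrow j ⟨hj, by rw [drift_eq]; omega⟩

variable {k : ℕ}

/-- The optimal assignment: the drifted-antidiagonal column if the row has one,
otherwise the column of the `1` of that row. -/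
noncomputable def sstar (v : Equiv.Perm (Fin n)) (hk : k ≤ n) (a : Fin k) : Fin k :=
  if h : ∃ j, Dp v k (Fin.castLE hk a) j then ⟨h.choose.1, Dp_col_lt h.choose_spec⟩
  else ⟨(v (Fin.castLE hk a)).1, by
    by_contra hc
    push_neg at hc
    exact h (exists_Dp v hk _ (by simpa using a.isLt) hc)⟩

lemma sstar_D {v : Equiv.Perm (Fin n)} (hk : k ≤ n) {a : Fin k} {j : Fin n}
    (h : Dp v k (Fin.castLE hk a) j) : Fin.castLE hk (sstar v hk a) = j := by
  unfold sstar
  rw [dif_pos ⟨j, h⟩]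
  have hspec := (⟨j, h⟩ : ∃ j, Dp v k (Fin.castLE hk a) j).choose_spec
  have := Dp_unique hspec h
  apply Fin.ext
  simpa using congrArg Fin.val this

lemma sstar_not {v : Equiv.Perm (Fin n)} (hk : k ≤ n) {a : Fin k}
    (h : ∀ j, ¬ Dp v k (Fin.castLE hk a) j) :
    Fin.castLE hk (sstar v hk a) = v (Fin.castLE hk a) := by
  unfold sstar
  rw [dif_neg (not_exists.mpr h)]
  exact Fin.ext rfl

lemma sstar_inj (v : Equiv.Perm (Fin n)) (hk : k ≤ n) :
    Function.Injective (sstar v hk) := by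
  intro a b hab
  by_cases ha : ∃ j, Dp v k (Fin.castLE hk a) j
  · obtain ⟨ja, hja⟩ := ha
    by_cases hb : ∃ j, Dp v k (Fin.castLE hk b) j
    · obtain ⟨jb, hjb⟩ := hb
      have h1 := sstar_D hk hja
      have h2 := sstar_D hk hjb
      rw [hab] at h1
      rw [h1] at h2
      have := Dp_unique_row hja (h2 ▸ hjb)
      exact Fin.castLE_injective hk this
    · exfalso
      have h1 := sstar_D hk hja
      have h2 := sstar_not hk (not_exists.mp hb)
      rw [hab, h2] at h1
      exact not_Dp_col v (Fin.castLE hk b) (by simpa using b.isLt)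
        (not_exists.mp hb) _ (h1 ▸ hja)
  · by_cases hb : ∃ j, Dp v k (Fin.castLE hk b) j
    · exfalso
      obtain ⟨jb, hjb⟩ := hb
      have h1 := sstar_D hk hjb
      have h2 := sstar_not hk (not_exists.mp ha)
      rw [← hab, h2] at h1
      exact not_Dp_col v (Fin.castLE hk a) (by simpa using a.isLt)
        (not_exists.mp ha) _ (h1 ▸ hjb)
    · have h1 := sstar_not hk (not_exists.mp ha)
      have h2 := sstar_not hk (not_exists.mp hb)
      rw [hab, h2] at h1
      have := v.injective h1
      exact Fin.castLE_injective hk this.symm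

/-- The optimal permutation. -/
noncomputable def pstar (v : Equiv.Perm (Fin n)) (hk : k ≤ n) : Equiv.Perm (Fin k) :=
  Equiv.ofBijective _ (Finite.injective_iff_bijective.mp (sstar_inj v hk))

lemma pstar_apply (v : Equiv.Perm (Fin n)) (hk : k ≤ n) (a : Fin k) :
    pstar v hk a = sstar v hk a := rfl

/-- Nonvanishing condition for a permutation term of the basic minor. -/
def NVp (v : Equiv.Perm (Fin n)) (hk : k ≤ n) (σ : Equiv.Perm (Fin k)) : Prop :=
  ∀ i : Fin k, Fin.castLE hk (σ i) ≤ v (Fin.castLE hk i) ∧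
    Fin.castLE hk i ≤ v.symm (Fin.castLE hk (σ i))

instance (v : Equiv.Perm (Fin n)) (hk : k ≤ n) (σ : Equiv.Perm (Fin k)) :
    Decidable (NVp v hk σ) := by
  unfold NVp; infer_instance

lemma NV_pstar (v : Equiv.Perm (Fin n)) (hk : k ≤ n) : NVp v hk (pstar v hk) := by
  intro a
  by_cases h : ∃ j, Dp v k (Fin.castLE hk a) j
  · obtain ⟨j, hj⟩ := h
    rw [pstar_apply, sstar_D hk hj]
    exact ⟨hj.1.1.le, hj.1.2.le⟩
  · rw [pstar_apply, sstar_not hk (not_exists.mp h)]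
    exact ⟨le_refl _, by simp⟩

/-- The key lemma: under the prefix-agreement hypothesis a variable choice in row `a`
must sit weakly left of the drifted antidiagonal cell of row `a`. -/
lemma KL (v : Equiv.Perm (Fin n)) (hk : k ≤ n) (σ : Equiv.Perm (Fin k)) (hNV : NVp v hk σ)
    (a : Fin k) (hpre : ∀ x, x < a → σ x = pstar v hk x)
    (hne : v (Fin.castLE hk a) ≠ Fin.castLE hk (σ a)) :
    ∃ j, Dp v k (Fin.castLE hk a) j ∧ Fin.castLE hk (σ a) ≤ j := by
  classical
  set A := Fin.castLE hk a with hA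
  set C := Fin.castLE hk (σ a) with hC
  have hVar : Vr v A C := by
    constructor
    · exact lt_of_le_of_ne (hNV a).1 (fun h => hne h.symm)
    · refine lt_of_le_of_ne (hNV a).2 (fun h => hne ?_)
      rw [h]
      simp
  have hD : ∃ j, Dp v k A j := by
    by_contra hnot
    have hsa : Fin.castLE hk (sstar v hk a) = v A := sstar_not hk (not_exists.mp hnot)
    set b := σ.symm (pstar v hk a) with hb
    have hσb : σ b = pstar v hk a := σ.apply_symm_apply _
    rcases lt_trichotomy b a with h1 | h1 | h1
    · have h2 := hpre b h1
      rw [h2] at hσb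
      have : b = a := (pstar v hk).injective hσb
      rw [this] at h1
      exact lt_irrefl _ h1
    · rw [h1] at hσb
      apply hne
      calc v A = Fin.castLE hk (sstar v hk a) := hsa.symm
        _ = Fin.castLE hk (pstar v hk a) := by rw [pstar_apply]
        _ = Fin.castLE hk (σ a) := by rw [hσb]
    · have h2 := (hNV b).2
      rw [hσb, pstar_apply, hsa] at h2
      simp only [Equiv.symm_apply_apply] at h2
      have : b ≤ a := by
        rw [Fin.le_def]
        exact h2
      exact absurd h1 (not_lt.mpr this)
  obtain ⟨J, hJ⟩ := hD
  refine ⟨J, hJ, ?_⟩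
  by_contra hCJ
  push_neg at hCJ
  have hqJ : A.1 + qq v A J = k := by rw [← drift_eq]; exact hJ.2
  have hqC : k + 1 ≤ A.1 + qq v A C := by
    have := qq_lt v hVar.2 hCJ
    omega
  have hColFree : ∀ x, ¬ Dp v k x C := by
    intro x hx
    rcases lt_trichotomy x A with h1 | h1 | h1
    · have h1' : x.1 < a.1 := h1
      have hxk : x.1 < k := lt_trans h1' a.isLt
      set xk : Fin k := ⟨x.1, hxk⟩ with hxk2
      have hcast : Fin.castLE hk xk = x := Fin.ext rfl
      have hxa : xk < a := by rw [Fin.lt_def]; exact h1'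
      have hσx : σ xk = pstar v hk xk := hpre xk hxa
      have hcc : Fin.castLE hk (σ xk) = C := by
        rw [hσx, pstar_apply, sstar_D hk (by rw [hcast]; exact hx)]
      have : σ xk = σ a := Fin.castLE_injective hk hcc
      have : xk = a := σ.injective this
      have : x.1 = a.1 := congrArg Fin.val this
      omega
    · rw [h1] at hx
      have := hx.2
      rw [drift_eq] at this
      omega
    · have hx2 : x.1 + qq v x C = k := by rw [← drift_eq]; exact hx.2
      have hbound : qq v A C ≤ qq v x C + (x.1 - A.1) := by
        have hsub : (Iic C).filter (fun d => A < v.symm d)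
            ⊆ ((Iic C).filter fun d => x < v.symm d)
              ∪ ((Iic C).filter fun d => A < v.symm d ∧ v.symm d ≤ x) := by
          intro d hd
          simp only [mem_filter, mem_Iic, mem_union] at hd ⊢
          rcases le_or_gt (v.symm d) x with h2 | h2
          · right; exact ⟨hd.1, hd.2, h2⟩
          · left; exact ⟨hd.1, h2⟩
        have h3 := card_le_card hsub
        have h4 := Finset.card_union_le ((Iic C).filter fun d => x < v.symm d)
          ((Iic C).filter fun d => A < v.symm d ∧ v.symm d ≤ x)
        have h5 : ((Iic C).filter fun d => A < v.symm d ∧ v.symm d ≤ x).card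
            ≤ (Ioc A x).card := by
          apply card_le_card_of_injOn (fun d => v.symm d)
          · intro d hd
            simp only [mem_coe, mem_filter, mem_Iic] at hd
            simp only [mem_coe, mem_Ioc]
            exact ⟨hd.2.1, hd.2.2⟩
          · intro p _ q _ h; exact v.symm.injective h
        rw [Fin.card_Ioc] at h5
        unfold qq at h3 h4 ⊢
        omega
      have h1' : A.1 ≤ x.1 := le_of_lt h1
      omega
  have hX : ∀ (x : Fin k) (e : Fin n), x < a → Dp v k (Fin.castLE hk x) e → e < C →
      v (Fin.castLE hk x) ≤ C := by
    intro x e hxa hxe heC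
    by_contra hCX
    push_neg at hCX
    set X := Fin.castLE hk x with hX2
    have hXA : X < A := by
      rw [Fin.lt_def]
      exact hxa
    have hVarXC : Vr v X C := ⟨hCX, lt_trans hXA hVar.2⟩
    have hqXe : X.1 + qq v X e = k := by rw [← drift_eq]; exact hxe.2
    have hqXC : k + 1 ≤ X.1 + qq v X C := by
      have := qq_lt v hVarXC.2 heC
      omega
    have e1 := rank_add_qq v.symm C X
    have e2 := rank_add_qq v X C
    have e3 := rank_symm v X C
    have hCk : C.1 < k := (σ a).isLt
    have hm : k - C.1 ≤ qq v.symm C X := by omega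
    obtain ⟨y, hy1, hy2⟩ := exists_qq_eq v.symm C (k - C.1) (by omega) X
      ((Vr_symm v X C).mpr hVarXC) hm
    have : Dp v.symm k C y := ⟨hy1, by rw [drift_eq]; omega⟩
    exact hColFree y ((Dp_symm v k y C).mp this)
  set S := (Iic a).filter (fun x => σ x ≤ σ a) with hS
  have hcard1 : S.card + ((Iic a).filter fun x => ¬ σ x ≤ σ a).card = a.1 + 1 := by
    have h := Finset.card_filter_add_card_filter_not (s := Iic a)
      (p := fun x => σ x ≤ σ a)
    rw [Fin.card_Iic] at h
    exact h
  have hcard2 : ((Iic a).filter fun x => ¬ σ x ≤ σ a).card ≤ (Ioi (σ a)).card := by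
    apply card_le_card_of_injOn (fun x => σ x)
    · intro x hx
      simp only [mem_coe, mem_filter, mem_Iic, not_le] at hx
      simp only [mem_coe, mem_Ioi]
      exact hx.2
    · intro p _ q _ h; exact σ.injective h
  rw [Fin.card_Ioi] at hcard2
  have haS : a ∈ S := by simp [hS, mem_filter, mem_Iic]
  have hSpos : 1 ≤ S.card := card_pos.mpr ⟨a, haS⟩
  have herase : (S.erase a).card = S.card - 1 := card_erase_of_mem haS
  have hrank : S.card ≤ rankP n v A C + 1 := by
    rw [rank_eq]
    have hmain : (S.erase a).card ≤ ((Iic C).filter fun d => v.symm d ≤ A).card := by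
      apply card_le_card_of_injOn (fun x => v (Fin.castLE hk x))
      · intro x hx
        have hxS : x ∈ S := Finset.mem_of_mem_erase hx
        have hxne : x ≠ a := Finset.ne_of_mem_erase hx
        simp only [hS, mem_filter, mem_Iic] at hxS
        have hxlt : x < a := lt_of_le_of_ne hxS.1 hxne
        have hσx : σ x = pstar v hk x := hpre x hxlt
        have hvX : v (Fin.castLE hk x) ≤ C := by
          by_cases hDx : ∃ e, Dp v k (Fin.castLE hk x) e
          · obtain ⟨e, he⟩ := hDx
            have hce : Fin.castLE hk (σ x) = e := by rw [hσx, pstar_apply, sstar_D hk he]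
            have heC' : e ≤ C := by
              rw [← hce]
              rw [Fin.le_def]
              exact hxS.2
            have heCne : e ≠ C := by
              intro h
              apply hxne
              apply σ.injective
              apply Fin.castLE_injective hk
              rw [hce, h]
            exact hX x e hxlt he (lt_of_le_of_ne heC' heCne)
          · have h2 := sstar_not hk (not_exists.mp hDx)
            rw [← pstar_apply, ← hσx] at h2
            rw [← h2, Fin.le_def]
            exact hxS.2
        simp only [mem_coe, mem_filter, mem_Iic]
        refine ⟨hvX, ?_⟩
        simp only [Equiv.symm_apply_apply]
        rw [Fin.le_def]
        exact hxS.1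
      · intro p _ q _ h
        exact Fin.castLE_injective hk (v.injective h)
    omega
  have e2 := rank_add_qq v A C
  have hCa : C.1 = (σ a).1 := rfl
  have hAa : A.1 = a.1 := rfl
  have hak : a.1 < k := a.isLt
  have hsk : (σ a).1 < k := (σ a).isLt
  omega


section Poly
open MvPolynomial

/-- The exponent vector of the monomial contributed by a permutation term. -/
noncomputable def uexp (v : Equiv.Perm (Fin n)) (hk : k ≤ n) (σ : Equiv.Perm (Fin k)) :
    (Fin n × Fin n) →₀ ℕ :=
  ∑ i : Fin k, if v (Fin.castLE hk i) = Fin.castLE hk (σ i) then 0 else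
    Finsupp.single (Fin.castLE hk i, Fin.castLE hk (σ i)) 1

lemma uexp_apply (v : Equiv.Perm (Fin n)) (hk : k ≤ n) (σ : Equiv.Perm (Fin k))
    (x₀ : Fin k) (y : Fin n) :
    uexp v hk σ (Fin.castLE hk x₀, y)
      = if v (Fin.castLE hk x₀) ≠ Fin.castLE hk (σ x₀) ∧ y = Fin.castLE hk (σ x₀)
        then 1 else 0 := by
  classical
  unfold uexp
  rw [Finsupp.finset_sum_apply]
  rw [Finset.sum_eq_single x₀]
  · by_cases h : v (Fin.castLE hk x₀) = Fin.castLE hk (σ x₀)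
    · simp [h]
    · rw [if_neg h, Finsupp.single_apply]
      by_cases hy : y = Fin.castLE hk (σ x₀)
      · simp [hy, h]
      · rw [if_neg, if_neg]
        · exact fun hc => hy hc.2
        · intro hc
          exact hy (congrArg Prod.snd hc).symm
  · intro b _ hb
    by_cases h : v (Fin.castLE hk b) = Fin.castLE hk (σ b)
    · simp [h]
    · have hc : ¬ ((Fin.castLE hk b, Fin.castLE hk (σ b)) = ((Fin.castLE hk x₀ : Fin n), y)) := by
        intro hc
        exact hb (Fin.castLE_injective hk (congrArg Prod.fst hc))
      rw [if_neg h, Finsupp.single_apply, if_neg hc]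
  · intro h
    exact absurd (Finset.mem_univ x₀) h

lemma uexp_apply_high (v : Equiv.Perm (Fin n)) (hk : k ≤ n) (σ : Equiv.Perm (Fin k))
    (x y : Fin n) (hx : k ≤ x.1) : uexp v hk σ (x, y) = 0 := by
  classical
  unfold uexp
  rw [Finsupp.finset_sum_apply]
  apply Finset.sum_eq_zero
  intro i _
  by_cases h : v (Fin.castLE hk i) = Fin.castLE hk (σ i)
  · simp [h]
  · have hc : ¬ ((Fin.castLE hk i, Fin.castLE hk (σ i)) = (x, y)) := by
      intro hc
      have h2 : Fin.castLE hk i = x := congrArg Prod.fst hc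
      have h3 := i.isLt
      have h4 : (Fin.castLE hk i).1 = x.1 := congrArg Fin.val h2
      simp at h4
      omega
    rw [if_neg h, Finsupp.single_apply, if_neg hc]

lemma uexp_inj (v : Equiv.Perm (Fin n)) (hk : k ≤ n) {σ τ : Equiv.Perm (Fin k)}
    (h : uexp v hk σ = uexp v hk τ) : σ = τ := by
  apply Equiv.ext
  intro x
  have happ : ∀ p, uexp v hk σ p = uexp v hk τ p := fun p => by rw [h]
  by_cases hσ : v (Fin.castLE hk x) = Fin.castLE hk (σ x)
  · by_cases hτ : v (Fin.castLE hk x) = Fin.castLE hk (τ x)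
    · exact Fin.castLE_injective hk (hσ ▸ hτ)
    · exfalso
      have h1 := happ (Fin.castLE hk x, Fin.castLE hk (τ x))
      rw [uexp_apply, uexp_apply, if_neg (fun hc => hc.1 hσ), if_pos ⟨hτ, rfl⟩] at h1
      exact zero_ne_one h1
  · by_cases hτ : v (Fin.castLE hk x) = Fin.castLE hk (τ x)
    · exfalso
      have h1 := happ (Fin.castLE hk x, Fin.castLE hk (σ x))
      rw [uexp_apply, uexp_apply, if_pos ⟨hσ, rfl⟩, if_neg (fun hc => hc.1 hτ)] at h1
      exact one_ne_zero h1
    · have h1 := happ (Fin.castLE hk x, Fin.castLE hk (σ x))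
      rw [uexp_apply, uexp_apply, if_pos ⟨hσ, rfl⟩] at h1
      by_cases hc : Fin.castLE hk (σ x) = Fin.castLE hk (τ x)
      · exact Fin.castLE_injective hk hc
      · exfalso
        rw [if_neg (fun hcc => hc hcc.2)] at h1
        exact one_ne_zero h1

lemma prod_monomial_one {α : Type} (s : Finset α) (f : α → ((Fin n × Fin n) →₀ ℕ)) :
    ∏ i ∈ s, (MvPolynomial.monomial (f i) (1 : ℂ))
      = MvPolynomial.monomial (∑ i ∈ s, f i) 1 := by
  classical
  induction s using Finset.cons_induction with
  | empty => simp
  | cons a s ha ih =>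
      rw [Finset.prod_cons, Finset.sum_cons, ih, MvPolynomial.monomial_mul, one_mul]

lemma prod_NV (v : Equiv.Perm (Fin n)) (hk : k ≤ n) (σ : Equiv.Perm (Fin k))
    (hNV : NVp v hk σ) :
    (∏ i : Fin k, Zv n v (Fin.castLE hk i) (Fin.castLE hk (σ i)))
      = MvPolynomial.monomial (uexp v hk σ) (1 : ℂ) := by
  classical
  have hentry : ∀ i : Fin k, Zv n v (Fin.castLE hk i) (Fin.castLE hk (σ i))
      = MvPolynomial.monomial
          (if v (Fin.castLE hk i) = Fin.castLE hk (σ i) then 0 else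
            Finsupp.single (Fin.castLE hk i, Fin.castLE hk (σ i)) 1) (1 : ℂ) := by
    intro i
    by_cases h : v (Fin.castLE hk i) = Fin.castLE hk (σ i)
    · rw [if_pos h]
      simp only [Zv, Matrix.of_apply, if_pos h]
      rw [MvPolynomial.monomial_zero']
      simp
    · have h2 : ¬ (v (Fin.castLE hk i) < Fin.castLE hk (σ i)
          ∨ v.symm (Fin.castLE hk (σ i)) < Fin.castLE hk i) := by
        push_neg
        exact ⟨(hNV i).1, (hNV i).2⟩
      rw [if_neg h]
      simp only [Zv, Matrix.of_apply, if_neg h, if_neg h2]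
      rw [← MvPolynomial.X_pow_eq_monomial, pow_one]
  rw [Finset.prod_congr rfl (fun i _ => hentry i), prod_monomial_one]
  rfl

lemma prod_not_NV (v : Equiv.Perm (Fin n)) (hk : k ≤ n) (σ : Equiv.Perm (Fin k))
    (h : ¬ NVp v hk σ) :
    (∏ i : Fin k, Zv n v (Fin.castLE hk i) (Fin.castLE hk (σ i))) = 0 := by
  classical
  unfold NVp at h
  push_neg at h
  obtain ⟨i, hcond⟩ := h
  apply Finset.prod_eq_zero (Finset.mem_univ i)
  have hz : v (Fin.castLE hk i) < Fin.castLE hk (σ i)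
      ∨ v.symm (Fin.castLE hk (σ i)) < Fin.castLE hk i := by
    by_cases hA : Fin.castLE hk (σ i) ≤ v (Fin.castLE hk i)
    · right; exact hcond hA
    · left; exact not_le.mp hA
  have hne : v (Fin.castLE hk i) ≠ Fin.castLE hk (σ i) := by
    rcases hz with h | h
    · exact ne_of_lt h
    · intro he
      rw [← he] at h
      simp at h
  simp [Zv, Matrix.of_apply, hne, hz]


lemma basicMinor_eq (v : Equiv.Perm (Fin n)) (hk : k ≤ n) :
    basicMinor n k hk v = ∑ σ : Equiv.Perm (Fin k),
      Equiv.Perm.sign σ • (∏ i : Fin k, Zv n v (Fin.castLE hk i) (Fin.castLE hk (σ i))) := by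
  unfold basicMinor
  rw [← Matrix.det_transpose, Matrix.det_apply]
  apply Finset.sum_congr rfl
  intro σ _
  congr 1

lemma coeff_basicMinor (v : Equiv.Perm (Fin n)) (hk : k ≤ n) (u : (Fin n × Fin n) →₀ ℕ) :
    MvPolynomial.coeff u (basicMinor n k hk v)
      = ∑ σ : Equiv.Perm (Fin k),
          if NVp v hk σ ∧ uexp v hk σ = u then ((Equiv.Perm.sign σ : ℤ) : ℂ) else 0 := by
  classical
  rw [basicMinor_eq v hk, MvPolynomial.coeff_sum]
  apply Finset.sum_congr rfl
  intro σ _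
  rw [Units.smul_def, MvPolynomial.coeff_smul]
  by_cases h1 : NVp v hk σ
  · rw [prod_NV v hk σ h1, MvPolynomial.coeff_monomial]
    by_cases h2 : uexp v hk σ = u
    · rw [if_pos h2, if_pos ⟨h1, h2⟩]
      simp
    · rw [if_neg h2, if_neg (fun hc => h2 hc.2)]
      simp
  · rw [prod_not_NV v hk σ h1, if_neg (fun hc => h1 hc.1)]
    simp

lemma coeff_at_ustar (v : Equiv.Perm (Fin n)) (hk : k ≤ n) :
    MvPolynomial.coeff (uexp v hk (pstar v hk)) (basicMinor n k hk v)
      = ((Equiv.Perm.sign (pstar v hk) : ℤ) : ℂ) := by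
  classical
  rw [coeff_basicMinor]
  rw [Finset.sum_eq_single (pstar v hk)]
  · rw [if_pos ⟨NV_pstar v hk, rfl⟩]
  · intro σ _ hσ
    rw [if_neg]
    rintro ⟨h1, h2⟩
    exact hσ (uexp_inj v hk h2)
  · intro h
    exact absurd (Finset.mem_univ _) h

lemma support_subset (v : Equiv.Perm (Fin n)) (hk : k ≤ n) (u : (Fin n × Fin n) →₀ ℕ)
    (hu : u ∈ (basicMinor n k hk v).support) : ∃ σ, NVp v hk σ ∧ uexp v hk σ = u := by
  classical
  by_contra hno
  push_neg at hno
  apply MvPolynomial.mem_support_iff.mp hu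
  rw [coeff_basicMinor]
  apply Finset.sum_eq_zero
  intro σ _
  rw [if_neg]
  rintro ⟨h1, h2⟩
  exact hno σ h1 h2

lemma le_ustar (v : Equiv.Perm (Fin n)) (hk : k ≤ n) (ord : TermOrder (Fin n × Fin n))
    (hord : IsAntidiagLex n n ord) (σ : Equiv.Perm (Fin k)) (hNV : NVp v hk σ) :
    ord.le (uexp v hk σ) (uexp v hk (pstar v hk)) := by
  classical
  rw [hord]
  by_cases heq : uexp v hk σ = uexp v hk (pstar v hk)
  · left; exact heq
  right
  have hσne : σ ≠ pstar v hk := fun h => heq (by rw [h])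
  set Sd := (Finset.univ : Finset (Fin k)).filter (fun x => σ x ≠ pstar v hk x) with hSd
  have hSdne : Sd.Nonempty := by
    by_contra hempty
    rw [Finset.not_nonempty_iff_eq_empty] at hempty
    apply hσne
    apply Equiv.ext
    intro x
    by_contra hx
    have hmem : x ∈ Sd := by simp [hSd, hx]
    rw [hempty] at hmem
    simp at hmem
  set a := Sd.min' hSdne with ha
  have haSd : σ a ≠ pstar v hk a := by
    have := Sd.min'_mem hSdne
    simp only [hSd, Finset.mem_filter, Finset.mem_univ, true_and] at this
    exact this
  have hpre : ∀ x, x < a → σ x = pstar v hk x := by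
    intro x hx
    by_contra hne
    have : a ≤ x := Sd.min'_le x (by simp [hSd, hne])
    exact absurd hx (not_lt.mpr this)
  set A := Fin.castLE hk a with hA
  have hDa : ∃ j, Dp v k A j := by
    by_cases hveq : v A = Fin.castLE hk (σ a)
    · by_contra hnot
      apply haSd
      apply Fin.castLE_injective hk
      rw [← hveq, pstar_apply, sstar_not hk (not_exists.mp hnot)]
    · obtain ⟨j, hj, _⟩ := KL v hk σ hNV a hpre hveq
      exact ⟨j, hj⟩
  set J := Fin.castLE hk (pstar v hk a) with hJ
  have hDJ : Dp v k A J := by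
    obtain ⟨j0, hj0⟩ := hDa
    have := sstar_D hk hj0
    rw [hJ, pstar_apply, this]
    exact hj0
  have hup1 : uexp v hk (pstar v hk) (A, J) = 1 := by
    rw [hA, uexp_apply, if_pos ⟨fun hc => absurd hDJ.1.1 (by rw [← hJ] at hc; rw [hc]; simp), hJ⟩]
  have hup0 : ∀ y : Fin n, y ≠ J → uexp v hk (pstar v hk) (A, y) = 0 := by
    intro y hy
    rw [hA, uexp_apply, if_neg (fun hc => hy (by rw [hc.2, hJ]))]
  have huσ0 : ∀ y : Fin n, y = J ∨ J < y → uexp v hk σ (A, y) = 0 := by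
    intro y hy
    rw [hA, uexp_apply]
    by_cases hveq : v A = Fin.castLE hk (σ a)
    · rw [if_neg (fun hc => hc.1 hveq)]
    · obtain ⟨j, hj, hle⟩ := KL v hk σ hNV a hpre hveq
      have hjJ : j = J := Dp_unique hj hDJ
      rw [hjJ] at hle
      have hCJ : Fin.castLE hk (σ a) ≠ J := by
        intro hc
        apply haSd
        apply Fin.castLE_injective hk
        rw [hc, hJ]
      have hCltJ : Fin.castLE hk (σ a) < J := lt_of_le_of_ne hle hCJ
      rw [if_neg]
      rintro ⟨-, hyc⟩
      rcases hy with hy | hy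
      · rw [hy] at hyc
        exact hCJ hyc.symm
      · rw [hyc] at hy
        exact absurd hCltJ (not_lt.mpr hy.le)
  have hrowbelow : ∀ (x y : Fin n), x.1 < a.1 → uexp v hk σ (x, y) = uexp v hk (pstar v hk) (x, y) := by
    intro x y hx
    have hxk : x.1 < k := lt_trans hx a.isLt
    set xk : Fin k := ⟨x.1, hxk⟩ with hxk2
    have hcast : Fin.castLE hk xk = x := Fin.ext rfl
    have hσx : σ xk = pstar v hk xk := hpre xk (by rw [Fin.lt_def]; exact hx)
    rw [← hcast, uexp_apply, uexp_apply, hσx]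
  refine ⟨(A, J), ?_, ?_⟩
  · rw [hup1, huσ0 J (Or.inl rfl)]
    norm_num
  · rintro ⟨x, y⟩ hq
    unfold lexRank at hq
    simp only at hq
    have hyn : y.1 < n := y.isLt
    have hJn : J.1 < n := J.isLt
    have hAa : (A.1 : ℕ) = a.1 := rfl
    rcases lt_trichotomy x.1 a.1 with h1 | h1 | h1
    · exact hrowbelow x y h1
    · have hxA : x = A := Fin.ext (by rw [hAa]; exact h1)
      have hJy : J < y := by
        rw [Fin.lt_def]
        rw [hxA] at hq
        rw [hAa] at hq
        omega
      rw [hxA, huσ0 y (Or.inr hJy), hup0 y (fun hc => absurd hJy (by rw [hc]; exact lt_irrefl _))]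
    · exfalso
      have hmul : a.1 * n + n ≤ x.1 * n := by
        calc a.1 * n + n = (a.1 + 1) * n := by ring
          _ ≤ x.1 * n := Nat.mul_le_mul_right n h1
      rw [hAa] at hq
      omega

lemma uexp_pstar_eq (v : Equiv.Perm (Fin n)) (hk : k ≤ n) :
    uexp v hk (pstar v hk)
      = ∑ p ∈ Finset.univ.filter (fun p : Fin n × Fin n =>
          (p.2 < v p.1 ∧ p.1 < v.symm p.2) ∧ driftP n v p.1 p.2 = k),
        Finsupp.single p 1 := by
  classical
  ext q
  obtain ⟨x, y⟩ := q
  rw [Finsupp.finset_sum_apply]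
  have hrhs : (∑ p ∈ Finset.univ.filter (fun p : Fin n × Fin n =>
      (p.2 < v p.1 ∧ p.1 < v.symm p.2) ∧ driftP n v p.1 p.2 = k),
      (Finsupp.single p 1) (x, y)) = if Dp v k x y then 1 else 0 := by
    rw [Finset.sum_congr rfl (fun p _ => Finsupp.single_apply)]
    rw [Finset.sum_ite_eq' (Finset.univ.filter (fun p : Fin n × Fin n =>
      (p.2 < v p.1 ∧ p.1 < v.symm p.2) ∧ driftP n v p.1 p.2 = k)) ((x, y) : Fin n × Fin n)
      (fun _ => (1 : ℕ))]
    congr 1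
    simp only [Finset.mem_filter, Finset.mem_univ, true_and]
    rfl
  rw [hrhs]
  by_cases hx : x.1 < k
  · set xk : Fin k := ⟨x.1, hx⟩ with hxk2
    have hcast : Fin.castLE hk xk = x := Fin.ext rfl
    rw [← hcast, uexp_apply]
    by_cases hD : ∃ j, Dp v k (Fin.castLE hk xk) j
    · obtain ⟨j0, hj0⟩ := hD
      have hps : Fin.castLE hk (pstar v hk xk) = j0 := by
        rw [pstar_apply, sstar_D hk hj0]
      by_cases hy : y = j0
      · rw [if_pos ⟨by rw [hps]; exact fun hc => absurd hj0.1.1 (by rw [hc]; simp),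
          by rw [hps, hy]⟩, if_pos (by rw [hy]; exact hj0)]
      · rw [if_neg (fun hc => hy (by rw [hc.2, hps])), if_neg (fun hc => hy (Dp_unique hc hj0))]
    · have hps : Fin.castLE hk (pstar v hk xk) = v (Fin.castLE hk xk) := by
        rw [pstar_apply, sstar_not hk (not_exists.mp hD)]
      rw [if_neg (fun hc => hc.1 hps.symm), if_neg (fun hc => hD ⟨y, hc⟩)]
  · rw [uexp_apply_high v hk _ x y (not_lt.mp hx), if_neg (fun hc => hx (Dp_row_lt hc))]


end Poly

end BMAux

open GCS in
/-- Theorem `minorscover` (I): for the antidiagonal lexicographic order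
determined by `z_{1n} ≻ ⋯ ≻ z_{11} ≻ z_{2n} ≻ ⋯ ≻ z_{n1}`, the lead term of the `k`-th
basic minor of `Z_v` is `∏_{(i,j) ∈ D_v(k)} z_{ij}`. -/
theorem basicMinor_leadTerm
    (n : ℕ) (v : Equiv.Perm (Fin n))
    (ord : TermOrder (Fin n × Fin n)) (hord : IsAntidiagLex n n ord)
    (k : ℕ) (hk1 : 1 ≤ k) (hk : k ≤ n) :
    IsInitExp ord (basicMinor n k hk v)
      (∑ p ∈ Finset.univ.filter (fun p : Fin n × Fin n =>
          (p.2 < v p.1 ∧ p.1 < v.symm p.2) ∧ driftP n v p.1 p.2 = k),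
        Finsupp.single p 1) := by
  classical
  rw [← BMAux.uexp_pstar_eq v hk]
  constructor
  · rw [MvPolynomial.mem_support_iff, BMAux.coeff_at_ustar v hk]
    exact_mod_cast Units.ne_zero (Equiv.Perm.sign (BMAux.pstar v hk))
  · intro w hw
    obtain ⟨σ, hNV, rfl⟩ := BMAux.support_subset v hk w hw
    exact BMAux.le_ustar v hk ord hord σ hNV
end

section
/- Let v ∈ S_n, fix i' ∈ [n], let v' = del_{i'}(v) ∈ S_{n−1}, and let φ = φ_{i', v(i')}. Then for all a ∈ [n] ∖ {i'} and b ∈ [n] ∖ {v(i')}: drift_{v'}(φ(a,b)) = drift_v(a,b) − 1 if a > i' or b > v(i'), and drift_{v'}(φ(a,b)) = drift_v(a,b) otherwise. -/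
namespace GCS

variable {m n : ℕ}

def insIdx {N : ℕ} (i : Fin (N + 1)) (k : Fin N) : Fin (N + 1) :=
  if k.1 < i.1 then ⟨k.1, by omega⟩ else ⟨k.1 + 1, by have := k.isLt; omega⟩

lemma val_ne' {N : ℕ} (a i : Fin (N + 1)) (h : a ≠ i) : a.1 ≠ i.1 :=
  fun hh => h (Fin.ext hh)

lemma insIdx_val {N : ℕ} (i : Fin (N + 1)) (k : Fin N) :
    (insIdx i k).1 = if k.1 < i.1 then k.1 else k.1 + 1 := by
  unfold insIdx; split <;> rfl

lemma delIdx_val {N : ℕ} (i a : Fin (N + 1)) (h : a ≠ i) :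
    (delIdx i a h).1 = if a.1 < i.1 then a.1 else a.1 - 1 := by
  unfold delIdx; split <;> rfl

lemma insIdx_ne {N : ℕ} (i : Fin (N + 1)) (k : Fin N) : insIdx i k ≠ i := by
  intro hh
  have := congrArg Fin.val hh
  rw [insIdx_val] at this
  split at this <;> omega

lemma delIdx_insIdx {N : ℕ} (i : Fin (N + 1)) (k : Fin N) :
    delIdx i (insIdx i k) (insIdx_ne i k) = k := by
  apply Fin.ext
  rw [delIdx_val, insIdx_val]
  split_ifs <;> omega

lemma insIdx_delIdx {N : ℕ} (i a : Fin (N + 1)) (h : a ≠ i) :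
    insIdx i (delIdx i a h) = a := by
  apply Fin.ext
  have hne := val_ne' a i h
  rw [insIdx_val, delIdx_val]
  split_ifs <;> omega

lemma delIdx_le_delIdx {N : ℕ} (i c a : Fin (N + 1)) (hc : c ≠ i) (ha : a ≠ i) :
    delIdx i c hc ≤ delIdx i a ha ↔ c ≤ a := by
  have h1 := val_ne' c i hc
  have h2 := val_ne' a i ha
  rw [Fin.le_def, Fin.le_def, delIdx_val, delIdx_val]
  split_ifs <;> omega

lemma insIdx_le {N : ℕ} (i : Fin (N + 1)) (k : Fin N) (a : Fin (N + 1)) (ha : a ≠ i) :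
    insIdx i k ≤ a ↔ k ≤ delIdx i a ha := by
  have h2 := val_ne' a i ha
  rw [Fin.le_def, Fin.le_def, insIdx_val, delIdx_val]
  split_ifs <;> omega

lemma rank_le_fst (N : ℕ) (v : Equiv.Perm (Fin N)) (a b : Fin N) :
    rankP N v a b ≤ a.1 + 1 := by
  unfold rankP
  calc (Finset.univ.filter fun k : Fin N => k ≤ a ∧ v k ≤ b).card
      ≤ (Finset.Iic a).card := by
        apply Finset.card_le_card
        intro k hk
        simp only [Finset.mem_filter] at hk
        simpa using hk.2.1
    _ = a.1 + 1 := Fin.card_Iic a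

lemma rank_le_snd (N : ℕ) (v : Equiv.Perm (Fin N)) (a b : Fin N) :
    rankP N v a b ≤ b.1 + 1 := by
  unfold rankP
  calc (Finset.univ.filter fun k : Fin N => k ≤ a ∧ v k ≤ b).card
      ≤ (Finset.univ.filter fun k : Fin N => v k ≤ b).card := by
        apply Finset.card_le_card
        intro k hk
        simp only [Finset.mem_filter] at hk ⊢
        exact ⟨hk.1, hk.2.2⟩
    _ = (Finset.Iic b).card := by
        apply Finset.card_bij (fun k _ => v k)
        · intro k hk
          simp only [Finset.mem_filter] at hk
          simpa using hk.2
        · intro k1 _ k2 _ h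
          exact v.injective h
        · intro c hc
          refine ⟨v.symm c, ?_, by simp⟩
          simp only [Finset.mem_filter, Finset.mem_univ, true_and, Equiv.apply_symm_apply]
          simpa using hc
    _ = b.1 + 1 := Fin.card_Iic b

lemma rank_del (n : ℕ) (v : Equiv.Perm (Fin (n + 1))) (i' : Fin (n + 1)) (v' : Equiv.Perm (Fin n))
    (hv' : ∀ (c : Fin (n + 1)) (h : c ≠ i'),
      v' (delIdx i' c h) = delIdx (v i') (v c) (fun hh => h (v.injective hh)))
    (a b : Fin (n + 1)) (ha : a ≠ i') (hb : b ≠ v i') :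
    rankP (n + 1) v a b =
      rankP n v' (delIdx i' a ha) (delIdx (v i') b hb) +
        (if i' ≤ a ∧ v i' ≤ b then 1 else 0) := by
  classical
  set S : Finset (Fin (n + 1)) :=
    Finset.univ.filter fun k => k ≤ a ∧ v k ≤ b with hS
  have key : rankP n v' (delIdx i' a ha) (delIdx (v i') b hb) = (S.erase i').card := by
    unfold rankP
    apply Finset.card_bij (fun k _ => insIdx i' k)
    · intro k hk
      simp only [Finset.mem_filter, Finset.mem_univ, true_and] at hk
      rw [Finset.mem_erase, hS, Finset.mem_filter]
      refine ⟨insIdx_ne i' k, Finset.mem_univ _, (insIdx_le i' k a ha).mpr hk.1, ?_⟩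
      have h1 : v' k = delIdx (v i') (v (insIdx i' k))
          (fun hh => (insIdx_ne i' k) (v.injective hh)) := by
        have := hv' (insIdx i' k) (insIdx_ne i' k)
        rwa [delIdx_insIdx] at this
      have h2 := hk.2
      rw [h1] at h2
      exact (delIdx_le_delIdx (v i') _ b _ hb).mp h2
    · intro k1 _ k2 _ heq
      have := congrArg Fin.val heq
      rw [insIdx_val, insIdx_val] at this
      apply Fin.ext
      split_ifs at this <;> omega
    · intro c hc
      rw [Finset.mem_erase, hS, Finset.mem_filter] at hc
      obtain ⟨hci, -, hca, hcb⟩ := hc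
      refine ⟨delIdx i' c hci, ?_, insIdx_delIdx i' c hci⟩
      simp only [Finset.mem_filter, Finset.mem_univ, true_and]
      constructor
      · rw [← insIdx_le i' _ a ha, insIdx_delIdx]
        exact hca
      · rw [hv' c hci]
        exact (delIdx_le_delIdx (v i') (v c) b _ hb).mpr hcb
  have hrank : rankP (n + 1) v a b = S.card := rfl
  by_cases hmem : i' ≤ a ∧ v i' ≤ b
  · have hi : i' ∈ S := by
      rw [hS, Finset.mem_filter]
      exact ⟨Finset.mem_univ _, hmem⟩
    have hpos : 0 < S.card := Finset.card_pos.mpr ⟨i', hi⟩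
    rw [if_pos hmem, key, hrank, Finset.card_erase_of_mem hi]
    omega
  · have hi : i' ∉ S := by
      rw [hS, Finset.mem_filter]
      tauto
    rw [if_neg hmem, key, hrank, Finset.erase_eq_of_notMem hi]
    omega

end GCS

open GCS in
/-- Lemma `delbij` (I): if `v' = del_{i'}(v)` and `φ = φ_{i', v(i')}`,
then `drift_{v'}(φ(a,b)) = drift_v(a,b) - 1` when `a > i'` or `b > v(i')`, and
`drift_{v'}(φ(a,b)) = drift_v(a,b)` otherwise. -/
theorem drift_of_deletion
    (n : ℕ) (v : Equiv.Perm (Fin (n + 1))) (i' : Fin (n + 1)) (v' : Equiv.Perm (Fin n))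
    (hv' : ∀ (c : Fin (n + 1)) (h : c ≠ i'),
      v' (delIdx i' c h) = delIdx (v i') (v c) (fun hh => h (v.injective hh)))
    (a b : Fin (n + 1)) (ha : a ≠ i') (hb : b ≠ v i') :
    ((i' < a ∨ v i' < b) →
      driftP n v' (delIdx i' a ha) (delIdx (v i') b hb) = driftP (n + 1) v a b - 1) ∧
    (a < i' → b < v i' →
      driftP n v' (delIdx i' a ha) (delIdx (v i') b hb) = driftP (n + 1) v a b) := by
  have ha' := val_ne' a i' ha
  have hb' := val_ne' b (v i') hb
  have hA := delIdx_val i' a ha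
  have hB := delIdx_val (v i') b hb
  have hA' : (a.1 < i'.1 ∧ (delIdx i' a ha).1 = a.1) ∨
      (i'.1 < a.1 ∧ (delIdx i' a ha).1 = a.1 - 1) := by
    rw [hA] at *
    split_ifs with h <;> omega
  have hB' : (b.1 < (v i').1 ∧ (delIdx (v i') b hb).1 = b.1) ∨
      ((v i').1 < b.1 ∧ (delIdx (v i') b hb).1 = b.1 - 1) := by
    rw [hB] at *
    split_ifs with h <;> omega
  have hrank := rank_del n v i' v' hv' a b ha hb
  have hrank' : (i'.1 ≤ a.1 ∧ (v i').1 ≤ b.1 ∧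
      rankP (n + 1) v a b = rankP n v' (delIdx i' a ha) (delIdx (v i') b hb) + 1) ∨
      (¬(i'.1 ≤ a.1 ∧ (v i').1 ≤ b.1) ∧
      rankP (n + 1) v a b = rankP n v' (delIdx i' a ha) (delIdx (v i') b hb)) := by
    by_cases hc : i' ≤ a ∧ v i' ≤ b
    · rw [if_pos hc] at hrank
      exact Or.inl ⟨hc.1, hc.2, hrank⟩
    · rw [if_neg hc] at hrank
      refine Or.inr ⟨?_, by omega⟩
      simp only [Fin.le_def] at hc
      exact hc
  have h1 := rank_le_fst (n + 1) v a b
  have h2 := rank_le_snd (n + 1) v a b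
  constructor
  · intro hcase
    simp only [Fin.lt_def] at hcase
    unfold driftP
    omega
  · intro hc1 hc2
    simp only [Fin.lt_def] at hc1 hc2
    unfold driftP
    omega
end
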